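/- arXiv:2110.12015 — 4 statements merged into one kernel-verified Lean document; each statement's English description precedes it below -/
import Mathlib

section
/- Let x̄ ∈ F satisfy seq-CPLD (respectively, seq-CRCQ). Then there exists a neighborhood V of x̄ such that every x ∈ V ∩ F also satisfies seq-CPLD (respectively, seq-CRCQ), where the index sets I_0(x) and I_B(x) and the families D are taken relative to x. -/
open Filter Topology

noncomputable section

/-- Euclidean space `ℝ^k`. -/
abbrev Evec (k : ℕ) : Type := EuclideanSpace ℝ (Fin k)

/-- Membership of `y = (y₀, ŷ) ∈ ℝ × ℝ^p` in the second-order (Lorentz) cone `Λ_{1+p}`. -/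
def inSOC {p : ℕ} (y : ℝ × Evec p) : Prop := ‖y.2‖ ≤ y.1

/-- Normalization `v / ‖v‖`. -/
def unitv {p : ℕ} (v : Evec p) : Evec p := ‖v‖⁻¹ • v

/-- The transposed Jacobian `Dg(x)ᵀ u` of `g = (g0, gh) : ℝ^n → ℝ × ℝ^p` at `x`,
applied to `u = (u₀, û) ∈ ℝ × ℝ^p`. -/
def dgT {n p : ℕ} (g0 : Evec n → ℝ) (gh : Evec n → Evec p) (x : Evec n)
    (u : ℝ × Evec p) : Evec n :=
  u.1 • gradient g0 x + ∑ i, u.2 i • gradient (fun y => gh y i) x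

/-- Euclidean inner product on `ℝ × ℝ^p`. -/
def pairInner {p : ℕ} (u v : ℝ × Evec p) : ℝ := u.1 * v.1 + (inner ℝ u.2 v.2 : ℝ)

/-- Squared Euclidean norm on `ℝ × ℝ^p`. -/
def pairSq {p : ℕ} (y : ℝ × Evec p) : ℝ := y.1 ^ 2 + ‖y.2‖ ^ 2

/-- The Euclidean orthogonal projection onto the second-order cone
(expressed through the spectral decomposition). -/
def projSOC {p : ℕ} (y : ℝ × Evec p) : ℝ × Evec p :=
  ((max (y.1 - ‖y.2‖) 0 + max (y.1 + ‖y.2‖) 0) / 2,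
    ((max (y.1 + ‖y.2‖) 0 - max (y.1 - ‖y.2‖) 0) / (2 * ‖y.2‖)) • y.2)

/-- `j ∈ I₀(x)`, i.e. `g_j(x) = 0`. -/
def memI0 {n q : ℕ} {m : Fin q → ℕ} (g0 : Fin q → Evec n → ℝ)
    (gh : (j : Fin q) → Evec n → Evec (m j)) (x : Evec n) (j : Fin q) : Prop :=
  g0 j x = 0 ∧ gh j x = 0

/-- `j ∈ I_B(x)`, i.e. `g_j(x) ≠ 0` and `g_{j,0}(x) = ‖ĝ_j(x)‖`. -/
def memIB {n q : ℕ} {m : Fin q → ℕ} (g0 : Fin q → Evec n → ℝ)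
    (gh : (j : Fin q) → Evec n → Evec (m j)) (x : Evec n) (j : Fin q) : Prop :=
  ¬ (g0 j x = 0 ∧ gh j x = 0) ∧ g0 j x = ‖gh j x‖

/-- The linear combination, with coefficients `η, a, b`, of the family
`D_{J_B,J_-,J_+}(x, w)`: the vectors `Dg_j(x)ᵀ(1, -ĝ_j(x)/‖ĝ_j(x)‖)` (coefficients `η j`),
`Dg_j(x)ᵀ(1, -w j)` (coefficients `a j`) and `Dg_j(x)ᵀ(1, w j)` (coefficients `b j`). -/
def famComb {n q : ℕ} {m : Fin q → ℕ} (g0 : Fin q → Evec n → ℝ)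
    (gh : (j : Fin q) → Evec n → Evec (m j)) (x : Evec n)
    (w : (j : Fin q) → Evec (m j)) (η a b : Fin q → ℝ) : Evec n :=
  ∑ j, (η j • dgT (g0 j) (gh j) x (1, -unitv (gh j x))
      + a j • dgT (g0 j) (gh j) x (1, -(w j))
      + b j • dgT (g0 j) (gh j) x (1, w j))

/-- The family `D_{J_B,J_-,J_+}(x, w)` is linearly dependent. -/
def linDepD {n q : ℕ} {m : Fin q → ℕ} (g0 : Fin q → Evec n → ℝ)
    (gh : (j : Fin q) → Evec n → Evec (m j)) (JB Jm Jp : Fin q → Prop)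
    (x : Evec n) (w : (j : Fin q) → Evec (m j)) : Prop :=
  ∃ η a b : Fin q → ℝ,
    (∀ j, ¬ JB j → η j = 0) ∧ (∀ j, ¬ Jm j → a j = 0) ∧ (∀ j, ¬ Jp j → b j = 0) ∧
    ¬ (∀ j, η j = 0 ∧ a j = 0 ∧ b j = 0) ∧
    famComb g0 gh x w η a b = 0

/-- The family `D_{J_B,J_-,J_+}(x, w)` is positively linearly dependent. -/
def posLinDepD {n q : ℕ} {m : Fin q → ℕ} (g0 : Fin q → Evec n → ℝ)
    (gh : (j : Fin q) → Evec n → Evec (m j)) (JB Jm Jp : Fin q → Prop)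
    (x : Evec n) (w : (j : Fin q) → Evec (m j)) : Prop :=
  ∃ η a b : Fin q → ℝ,
    (∀ j, 0 ≤ η j) ∧ (∀ j, 0 ≤ a j) ∧ (∀ j, 0 ≤ b j) ∧
    (∀ j, ¬ JB j → η j = 0) ∧ (∀ j, ¬ Jm j → a j = 0) ∧ (∀ j, ¬ Jp j → b j = 0) ∧
    ¬ (∀ j, η j = 0 ∧ a j = 0 ∧ b j = 0) ∧
    famComb g0 gh x w η a b = 0

/-- The full family `{Dg_j(x)ᵀ u₁(g_j(x))}_{j ∈ I_B(x)} ∪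
`{Dg_j(x)ᵀ(1,-w j), Dg_j(x)ᵀ(1,w j)}_{j ∈ I₀(x)}` is linearly independent. -/
def famLinIndep {n q : ℕ} {m : Fin q → ℕ} (g0 : Fin q → Evec n → ℝ)
    (gh : (j : Fin q) → Evec n → Evec (m j)) (x : Evec n)
    (w : (j : Fin q) → Evec (m j)) : Prop :=
  ∀ η a b : Fin q → ℝ,
    (∀ j, ¬ memIB g0 gh x j → η j = 0) →
    (∀ j, ¬ memI0 g0 gh x j → a j = 0 ∧ b j = 0) →
    famComb g0 gh x w η a b = 0 →
    ∀ j, η j = 0 ∧ a j = 0 ∧ b j = 0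

/-- The full family is positively linearly independent. -/
def famPosLinIndep {n q : ℕ} {m : Fin q → ℕ} (g0 : Fin q → Evec n → ℝ)
    (gh : (j : Fin q) → Evec n → Evec (m j)) (x : Evec n)
    (w : (j : Fin q) → Evec (m j)) : Prop :=
  ∀ η a b : Fin q → ℝ,
    (∀ j, 0 ≤ η j) → (∀ j, 0 ≤ a j) → (∀ j, 0 ≤ b j) →
    (∀ j, ¬ memIB g0 gh x j → η j = 0) →
    (∀ j, ¬ memI0 g0 gh x j → a j = 0 ∧ b j = 0) →
    famComb g0 gh x w η a b = 0 →
    ∀ j, η j = 0 ∧ a j = 0 ∧ b j = 0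

/-- An admissible choice, along the (perturbed) sequence `x k + Δ`, of eigenvector
parameters `w k j` (for `k ∈ I`, `j ∈ I₀(xb)`) together with their limits `wb j`. -/
def eigParams {n q : ℕ} {m : Fin q → ℕ} (g0 : Fin q → Evec n → ℝ)
    (gh : (j : Fin q) → Evec n → Evec (m j)) (xb : Evec n) (x : ℕ → Evec n)
    (Δ : ℕ → (j : Fin q) → ℝ × Evec (m j)) (I : Set ℕ)
    (w : ℕ → (j : Fin q) → Evec (m j)) (wb : (j : Fin q) → Evec (m j)) : Prop :=
  (∀ k ∈ I, ∀ j, memI0 g0 gh xb j → ‖w k j‖ = 1 ∧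
      (gh j (x k) + (Δ k j).2 ≠ 0 → w k j = unitv (gh j (x k) + (Δ k j).2))) ∧
  (∀ j, memI0 g0 gh xb j → ‖wb j‖ = 1 ∧
      Tendsto (fun k => w k j) (atTop ⊓ 𝓟 I) (𝓝 (wb j)))

/-- Weak-nondegeneracy at `xb`. -/
def weakNondeg {n q : ℕ} {m : Fin q → ℕ} (g0 : Fin q → Evec n → ℝ)
    (gh : (j : Fin q) → Evec n → Evec (m j)) (xb : Evec n) : Prop :=
  ∀ x : ℕ → Evec n, Tendsto x atTop (𝓝 xb) →
    ∃ (I : Set ℕ) (w : ℕ → (j : Fin q) → Evec (m j)) (wb : (j : Fin q) → Evec (m j)),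
      I.Infinite ∧ eigParams g0 gh xb x (fun _ _ => 0) I w wb ∧
      famLinIndep g0 gh xb wb

/-- Weak-Robinson's CQ at `xb`. -/
def weakRobinson {n q : ℕ} {m : Fin q → ℕ} (g0 : Fin q → Evec n → ℝ)
    (gh : (j : Fin q) → Evec n → Evec (m j)) (xb : Evec n) : Prop :=
  ∀ x : ℕ → Evec n, Tendsto x atTop (𝓝 xb) →
    ∃ (I : Set ℕ) (w : ℕ → (j : Fin q) → Evec (m j)) (wb : (j : Fin q) → Evec (m j)),
      I.Infinite ∧ eigParams g0 gh xb x (fun _ _ => 0) I w wb ∧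
      famPosLinIndep g0 gh xb wb

/-- Weak-CRCQ at `xb`. -/
def weakCRCQ {n q : ℕ} {m : Fin q → ℕ} (g0 : Fin q → Evec n → ℝ)
    (gh : (j : Fin q) → Evec n → Evec (m j)) (xb : Evec n) : Prop :=
  ∀ x : ℕ → Evec n, Tendsto x atTop (𝓝 xb) →
    ∃ (I : Set ℕ) (w : ℕ → (j : Fin q) → Evec (m j)) (wb : (j : Fin q) → Evec (m j)),
      I.Infinite ∧ eigParams g0 gh xb x (fun _ _ => 0) I w wb ∧
      ∀ JB Jm Jp : Fin q → Prop,
        (∀ j, JB j → memIB g0 gh xb j) → (∀ j, Jm j → memI0 g0 gh xb j) →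
        (∀ j, Jp j → memI0 g0 gh xb j) →
        linDepD g0 gh JB Jm Jp xb wb →
        ∀ᶠ k in atTop ⊓ 𝓟 I, linDepD g0 gh JB Jm Jp (x k) (w k)

/-- Weak-CPLD at `xb`. -/
def weakCPLD {n q : ℕ} {m : Fin q → ℕ} (g0 : Fin q → Evec n → ℝ)
    (gh : (j : Fin q) → Evec n → Evec (m j)) (xb : Evec n) : Prop :=
  ∀ x : ℕ → Evec n, Tendsto x atTop (𝓝 xb) →
    ∃ (I : Set ℕ) (w : ℕ → (j : Fin q) → Evec (m j)) (wb : (j : Fin q) → Evec (m j)),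
      I.Infinite ∧ eigParams g0 gh xb x (fun _ _ => 0) I w wb ∧
      ∀ JB Jm Jp : Fin q → Prop,
        (∀ j, JB j → memIB g0 gh xb j) → (∀ j, Jm j → memI0 g0 gh xb j) →
        (∀ j, Jp j → memI0 g0 gh xb j) →
        posLinDepD g0 gh JB Jm Jp xb wb →
        ∀ᶠ k in atTop ⊓ 𝓟 I, linDepD g0 gh JB Jm Jp (x k) (w k)

/-- Seq-CRCQ at `xb`. -/
def seqCRCQ {n q : ℕ} {m : Fin q → ℕ} (g0 : Fin q → Evec n → ℝ)
    (gh : (j : Fin q) → Evec n → Evec (m j)) (xb : Evec n) : Prop :=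
  ∀ (x : ℕ → Evec n) (Δ : ℕ → (j : Fin q) → ℝ × Evec (m j)),
    Tendsto x atTop (𝓝 xb) →
    (∀ j, memI0 g0 gh xb j ∨ memIB g0 gh xb j → Tendsto (fun k => Δ k j) atTop (𝓝 0)) →
    ∃ (I : Set ℕ) (w : ℕ → (j : Fin q) → Evec (m j)) (wb : (j : Fin q) → Evec (m j)),
      I.Infinite ∧ eigParams g0 gh xb x Δ I w wb ∧
      ∀ JB Jm Jp : Fin q → Prop,
        (∀ j, JB j → memIB g0 gh xb j) → (∀ j, Jm j → memI0 g0 gh xb j) →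
        (∀ j, Jp j → memI0 g0 gh xb j) →
        linDepD g0 gh JB Jm Jp xb wb →
        ∀ᶠ k in atTop ⊓ 𝓟 I, linDepD g0 gh JB Jm Jp (x k) (w k)

/-- Seq-CPLD at `xb`. -/
def seqCPLD {n q : ℕ} {m : Fin q → ℕ} (g0 : Fin q → Evec n → ℝ)
    (gh : (j : Fin q) → Evec n → Evec (m j)) (xb : Evec n) : Prop :=
  ∀ (x : ℕ → Evec n) (Δ : ℕ → (j : Fin q) → ℝ × Evec (m j)),
    Tendsto x atTop (𝓝 xb) →
    (∀ j, memI0 g0 gh xb j ∨ memIB g0 gh xb j → Tendsto (fun k => Δ k j) atTop (𝓝 0)) →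
    ∃ (I : Set ℕ) (w : ℕ → (j : Fin q) → Evec (m j)) (wb : (j : Fin q) → Evec (m j)),
      I.Infinite ∧ eigParams g0 gh xb x Δ I w wb ∧
      ∀ JB Jm Jp : Fin q → Prop,
        (∀ j, JB j → memIB g0 gh xb j) → (∀ j, Jm j → memI0 g0 gh xb j) →
        (∀ j, Jp j → memI0 g0 gh xb j) →
        posLinDepD g0 gh JB Jm Jp xb wb →
        ∀ᶠ k in atTop ⊓ 𝓟 I, linDepD g0 gh JB Jm Jp (x k) (w k)

/-- The linear combination appearing in the definitions of nondegeneracy and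
Robinson's CQ: `Σ_{j} (η j • Dg_j(x)ᵀ(g_{j,0}(x), -ĝ_j(x)) + Dg_j(x)ᵀ (y j))`. -/
def ndgComb {n q : ℕ} {m : Fin q → ℕ} (g0 : Fin q → Evec n → ℝ)
    (gh : (j : Fin q) → Evec n → Evec (m j)) (x : Evec n)
    (η : Fin q → ℝ) (y : (j : Fin q) → ℝ × Evec (m j)) : Evec n :=
  ∑ j, (η j • dgT (g0 j) (gh j) x (g0 j x, -(gh j x)) + dgT (g0 j) (gh j) x (y j))

/-- Nondegeneracy at `xb`. -/
def Nondegenerate {n q : ℕ} {m : Fin q → ℕ} (g0 : Fin q → Evec n → ℝ)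
    (gh : (j : Fin q) → Evec n → Evec (m j)) (xb : Evec n) : Prop :=
  ∀ (η : Fin q → ℝ) (y : (j : Fin q) → ℝ × Evec (m j)),
    (∀ j, ¬ memIB g0 gh xb j → η j = 0) →
    (∀ j, ¬ memI0 g0 gh xb j → y j = 0) →
    ndgComb g0 gh xb η y = 0 →
    (∀ j, η j = 0) ∧ (∀ j, y j = 0)

/-- Robinson's CQ at `xb`. -/
def RobinsonCQ {n q : ℕ} {m : Fin q → ℕ} (g0 : Fin q → Evec n → ℝ)
    (gh : (j : Fin q) → Evec n → Evec (m j)) (xb : Evec n) : Prop :=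
  ∀ (η : Fin q → ℝ) (y : (j : Fin q) → ℝ × Evec (m j)),
    (∀ j, 0 ≤ η j) → (∀ j, inSOC (y j)) →
    (∀ j, ¬ memIB g0 gh xb j → η j = 0) →
    (∀ j, ¬ memI0 g0 gh xb j → y j = 0) →
    ndgComb g0 gh xb η y = 0 →
    (∀ j, η j = 0) ∧ (∀ j, y j = 0)

/-- The KKT conditions at `xb` for objective `f`. -/
def isKKT {n q : ℕ} {m : Fin q → ℕ} (f : Evec n → ℝ) (g0 : Fin q → Evec n → ℝ)
    (gh : (j : Fin q) → Evec n → Evec (m j)) (xb : Evec n) : Prop :=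
  ∃ μ : (j : Fin q) → ℝ × Evec (m j),
    (∀ j, inSOC (μ j)) ∧
    gradient f xb = ∑ j, dgT (g0 j) (gh j) xb (μ j) ∧
    ∀ j, pairInner (μ j) (g0 j xb, gh j xb) = 0

/-- The metric subregularity CQ (MSCQ) at `xb`, with Euclidean distances. -/
def MSCQat {n q : ℕ} {m : Fin q → ℕ} (g0 : Fin q → Evec n → ℝ)
    (gh : (j : Fin q) → Evec n → Evec (m j)) (xb : Evec n) : Prop :=
  ∃ γ > (0:ℝ), ∃ ε > (0:ℝ), ∀ x : Evec n, ‖x - xb‖ < ε →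
    Metric.infDist x {z : Evec n | ∀ j, ‖gh j z‖ ≤ g0 j z} ≤
      γ * sInf {d : ℝ | ∃ z : (j : Fin q) → ℝ × Evec (m j),
        (∀ j, inSOC (z j)) ∧
        d = Real.sqrt (∑ j, ((g0 j x - (z j).1) ^ 2 + ‖gh j x - (z j).2‖ ^ 2))}


section Robust

open Filter Topology Classical

lemma unitv_norm {p : ℕ} {v : Evec p} (hv : v ≠ 0) : ‖unitv v‖ = 1 := by
  rw [unitv, norm_smul, norm_inv, norm_norm]
  exact inv_mul_cancel₀ (norm_ne_zero_iff.2 hv)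

lemma unitv_of_norm_one {p : ℕ} {v : Evec p} (hv : ‖v‖ = 1) : unitv v = v := by
  rw [unitv, hv, inv_one, one_smul]

lemma unitv_smul_pos {p : ℕ} {c : ℝ} (hc : 0 < c) (v : Evec p) : unitv (c • v) = unitv v := by
  rcases eq_or_ne v 0 with rfl | hv
  · simp [unitv]
  · rw [unitv, unitv, norm_smul, Real.norm_eq_abs, abs_of_pos hc, mul_inv, smul_smul,
      mul_comm c⁻¹ ‖v‖⁻¹, mul_assoc, inv_mul_cancel₀ hc.ne', mul_one]

lemma continuous_gradient {n : ℕ} {f : Evec n → ℝ} (hf : ContDiff ℝ 1 f) :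
    Continuous fun x => gradient f x := by
  have h1 : Continuous fun x => fderiv ℝ f x := hf.continuous_fderiv one_ne_zero
  exact ((InnerProductSpace.toDual ℝ (Evec n)).symm.continuous).comp h1

lemma tendsto_dgT {n p : ℕ} {g0' : Evec n → ℝ} {gh' : Evec n → Evec p}
    (h0 : ContDiff ℝ 1 g0') (hh : ∀ i, ContDiff ℝ 1 fun x => gh' x i)
    {l : Filter ℕ} {X : ℕ → Evec n} {x' : Evec n} (hX : Tendsto X l (𝓝 x'))
    {U : ℕ → ℝ × Evec p} {u' : ℝ × Evec p} (hU : Tendsto U l (𝓝 u')) :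
    Tendsto (fun k => dgT g0' gh' (X k) (U k)) l (𝓝 (dgT g0' gh' x' u')) := by
  unfold dgT
  apply Tendsto.add
  · exact ((continuous_fst.tendsto u').comp hU).smul
      (((continuous_gradient h0).tendsto x').comp hX)
  · apply tendsto_finset_sum
    intro i _
    exact (((EuclideanSpace.proj i).continuous.tendsto _).comp
        ((continuous_snd.tendsto u').comp hU)).smul
      (((continuous_gradient (hh i)).tendsto x').comp hX)

lemma atTop_inf_principal_neBot {I : Set ℕ} (hI : I.Infinite) : (atTop ⊓ 𝓟 I).NeBot := by
  rw [inf_principal_neBot_iff]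
  intro U hU
  obtain ⟨N, hN⟩ := mem_atTop_sets.1 hU
  obtain ⟨b, hbI, hb⟩ := hI.exists_gt N
  exact ⟨b, hN b hb.le, hbI⟩

lemma tendsto_of_strictMono_range {φ : ℕ → ℕ} (hφ : StrictMono φ) {α : Type*} {f : ℕ → α}
    {L : Filter α} (h : Tendsto (f ∘ φ) atTop L) : Tendsto f (atTop ⊓ 𝓟 (Set.range φ)) L := by
  have hle : atTop ⊓ 𝓟 (Set.range φ) ≤ Filter.map φ atTop := by
    intro s hs
    obtain ⟨N, hN⟩ := mem_atTop_sets.1 (mem_map.1 hs)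
    refine mem_of_superset (inter_mem_inf (mem_atTop (φ N)) (mem_principal_self _)) ?_
    rintro k ⟨hk1, l, rfl⟩
    exact hN l (hφ.le_iff_le.1 hk1)
  exact (tendsto_map'_iff.2 h).mono_left hle

lemma exists_in_of_eventually {I : Set ℕ} (hI : I.Infinite) {P : ℕ → Prop}
    (h : ∀ᶠ k in atTop ⊓ 𝓟 I, P k) : ∃ k ∈ I, P k := by
  haveI := atTop_inf_principal_neBot hI
  obtain ⟨k, hk1, hk2⟩ := (h.and (eventually_inf_principal.2 (Eventually.of_forall fun k hk => hk))).exists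
  exact ⟨k, hk2, hk1⟩

lemma exists_const_subseq {α : Type*} [Finite α] (T : ℕ → α) :
    ∃ (a : α) (ψ : ℕ → ℕ), StrictMono ψ ∧ ∀ l, T (ψ l) = a := by
  classical
  obtain ⟨a, ha⟩ := Finite.exists_infinite_fiber T
  have hinf : (T ⁻¹' {a}).Infinite := Set.infinite_coe_iff.mp ha
  haveI := hinf.to_subtype
  refine ⟨a, Nat.orderEmbeddingOfSet (T ⁻¹' {a}), (Nat.orderEmbeddingOfSet _).strictMono, fun l => ?_⟩
  have h2 : (Nat.orderEmbeddingOfSet (T ⁻¹' {a})) l ∈ Set.range (Nat.orderEmbeddingOfSet (T ⁻¹' {a})) := ⟨l, rfl⟩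
  rwa [Nat.orderEmbeddingOfSet_range] at h2

lemma tendsto_close {E : Type*} [NormedAddCommGroup E] {f g : ℕ → E} {L : E}
    (hg : Tendsto g atTop (𝓝 L)) (hb : ∀ l, ‖f l - g l‖ ≤ 1/((l:ℝ)+1)) :
    Tendsto f atTop (𝓝 L) := by
  have h0 : Tendsto (fun l => f l - g l) atTop (𝓝 0) :=
    squeeze_zero_norm hb tendsto_one_div_add_atTop_nhds_zero_nat
  have := h0.add hg
  simpa using this


variable {n q : ℕ} {m : Fin q → ℕ}

lemma famComb_smul (g0 : Fin q → Evec n → ℝ) (gh : (j : Fin q) → Evec n → Evec (m j))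
    (x : Evec n) (w : (j : Fin q) → Evec (m j)) (c : ℝ) (η a b : Fin q → ℝ) :
    famComb g0 gh x w (fun j => c * η j) (fun j => c * a j) (fun j => c * b j)
      = c • famComb g0 gh x w η a b := by
  unfold famComb
  rw [Finset.smul_sum]
  exact Finset.sum_congr rfl fun j _ => by simp only [smul_add, mul_smul]

lemma famComb_congr_w {g0 : Fin q → Evec n → ℝ} {gh : (j : Fin q) → Evec n → Evec (m j)}
    {x : Evec n} {w w' : (j : Fin q) → Evec (m j)} {η a b : Fin q → ℝ}
    (h : ∀ j, (a j ≠ 0 ∨ b j ≠ 0) → w j = w' j) :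
    famComb g0 gh x w η a b = famComb g0 gh x w' η a b := by
  unfold famComb
  refine Finset.sum_congr rfl fun j _ => ?_
  by_cases ha : a j = 0 <;> by_cases hb : b j = 0
  · simp [ha, hb]
  · rw [h j (Or.inr hb)]
  · rw [h j (Or.inl ha)]
  · rw [h j (Or.inl ha)]

/-- Hypothesis-side dependence notion: positive linear dependence (CPLD) or
plain linear dependence (CRCQ). -/
def DepD (pos : Bool) (g0 : Fin q → Evec n → ℝ) (gh : (j : Fin q) → Evec n → Evec (m j))
    (JB Jm Jp : Fin q → Prop) (x : Evec n) (w : (j : Fin q) → Evec (m j)) : Prop :=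
  match pos with
  | true => posLinDepD g0 gh JB Jm Jp x w
  | false => linDepD g0 gh JB Jm Jp x w

lemma depD_elim {pos : Bool} {g0 : Fin q → Evec n → ℝ} {gh : (j : Fin q) → Evec n → Evec (m j)}
    {JB Jm Jp : Fin q → Prop} {x : Evec n} {w : (j : Fin q) → Evec (m j)}
    (h : DepD pos g0 gh JB Jm Jp x w) :
    ∃ η a b : Fin q → ℝ,
      (∀ j, ¬ JB j → η j = 0) ∧ (∀ j, ¬ Jm j → a j = 0) ∧ (∀ j, ¬ Jp j → b j = 0) ∧
      ¬ (∀ j, η j = 0 ∧ a j = 0 ∧ b j = 0) ∧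
      famComb g0 gh x w η a b = 0 ∧
      (pos = true → (∀ j, 0 ≤ η j) ∧ (∀ j, 0 ≤ a j) ∧ (∀ j, 0 ≤ b j)) := by
  cases pos
  · obtain ⟨η, a, b, h1, h2, h3, h4, h5⟩ := h
    exact ⟨η, a, b, h1, h2, h3, h4, h5, fun hc => by simp at hc⟩
  · obtain ⟨η, a, b, p1, p2, p3, h1, h2, h3, h4, h5⟩ := h
    exact ⟨η, a, b, h1, h2, h3, h4, h5, fun _ => ⟨p1, p2, p3⟩⟩

lemma depD_intro {pos : Bool} {g0 : Fin q → Evec n → ℝ} {gh : (j : Fin q) → Evec n → Evec (m j)}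
    {JB Jm Jp : Fin q → Prop} {x : Evec n} {w : (j : Fin q) → Evec (m j)}
    {η a b : Fin q → ℝ}
    (h1 : ∀ j, ¬ JB j → η j = 0) (h2 : ∀ j, ¬ Jm j → a j = 0) (h3 : ∀ j, ¬ Jp j → b j = 0)
    (h4 : ¬ (∀ j, η j = 0 ∧ a j = 0 ∧ b j = 0))
    (h5 : famComb g0 gh x w η a b = 0)
    (h6 : pos = true → (∀ j, 0 ≤ η j) ∧ (∀ j, 0 ≤ a j) ∧ (∀ j, 0 ≤ b j)) :
    DepD pos g0 gh JB Jm Jp x w := by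
  cases pos
  · exact ⟨η, a, b, h1, h2, h3, h4, h5⟩
  · obtain ⟨p1, p2, p3⟩ := h6 rfl
    exact ⟨η, a, b, p1, p2, p3, h1, h2, h3, h4, h5⟩

lemma depD_congr_w {pos : Bool} {g0 : Fin q → Evec n → ℝ} {gh : (j : Fin q) → Evec n → Evec (m j)}
    {JB Jm Jp : Fin q → Prop} {x : Evec n} {w w' : (j : Fin q) → Evec (m j)}
    (hw : ∀ j, Jm j ∨ Jp j → w j = w' j)
    (h : DepD pos g0 gh JB Jm Jp x w) : DepD pos g0 gh JB Jm Jp x w' := by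
  obtain ⟨η, a, b, h1, h2, h3, h4, h5, h6⟩ := depD_elim h
  refine depD_intro h1 h2 h3 h4 ?_ h6
  rw [← famComb_congr_w (w := w) (fun j hj => hw j ?_)]
  · exact h5
  · rcases hj with hj | hj
    · exact Or.inl (by by_contra hc; exact hj (h2 j hc))
    · exact Or.inr (by by_contra hc; exact hj (h3 j hc))

/-- seq-CPLD/seq-CRCQ, parametrized by the hypothesis-side dependence notion. -/
def seqD (pos : Bool) (g0 : Fin q → Evec n → ℝ) (gh : (j : Fin q) → Evec n → Evec (m j))
    (xb : Evec n) : Prop :=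
  ∀ (x : ℕ → Evec n) (Δ : ℕ → (j : Fin q) → ℝ × Evec (m j)),
    Tendsto x atTop (𝓝 xb) →
    (∀ j, memI0 g0 gh xb j ∨ memIB g0 gh xb j → Tendsto (fun k => Δ k j) atTop (𝓝 0)) →
    ∃ (I : Set ℕ) (w : ℕ → (j : Fin q) → Evec (m j)) (wb : (j : Fin q) → Evec (m j)),
      I.Infinite ∧ eigParams g0 gh xb x Δ I w wb ∧
      ∀ JB Jm Jp : Fin q → Prop,
        (∀ j, JB j → memIB g0 gh xb j) → (∀ j, Jm j → memI0 g0 gh xb j) →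
        (∀ j, Jp j → memI0 g0 gh xb j) →
        DepD pos g0 gh JB Jm Jp xb wb →
        ∀ᶠ k in atTop ⊓ 𝓟 I, linDepD g0 gh JB Jm Jp (x k) (w k)

lemma seqD_true_iff {g0 : Fin q → Evec n → ℝ} {gh : (j : Fin q) → Evec n → Evec (m j)}
    {xb : Evec n} : seqD true g0 gh xb ↔ seqCPLD g0 gh xb := Iff.rfl

lemma seqD_false_iff {g0 : Fin q → Evec n → ℝ} {gh : (j : Fin q) → Evec n → Evec (m j)}
    {xb : Evec n} : seqD false g0 gh xb ↔ seqCRCQ g0 gh xb := Iff.rfl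

/-- The local (pointwise) form of CPLD/CRCQ. -/
def LocD (pos : Bool) (g0 : Fin q → Evec n → ℝ) (gh : (j : Fin q) → Evec n → Evec (m j))
    (x : Evec n) : Prop :=
  ∀ JB Jm Jp : Fin q → Prop,
    (∀ j, JB j → memIB g0 gh x j) → (∀ j, Jm j → memI0 g0 gh x j) →
    (∀ j, Jp j → memI0 g0 gh x j) →
    ∀ wb : (j : Fin q) → Evec (m j), (∀ j, Jm j ∨ Jp j → ‖wb j‖ = 1) →
    DepD pos g0 gh JB Jm Jp x wb →
    ∃ δ > (0:ℝ), ∀ u : Evec n, ‖u - x‖ < δ → ∀ ω : (j : Fin q) → Evec (m j),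
      (∀ j, Jm j ∨ Jp j → ‖ω j‖ = 1 ∧ ‖ω j - wb j‖ < δ) →
      linDepD g0 gh JB Jm Jp u ω

lemma lemA (hm : ∀ j, 1 ≤ m j) (pos : Bool) (g0 : Fin q → Evec n → ℝ)
    (gh : (j : Fin q) → Evec n → Evec (m j)) (x : Evec n)
    (hloc : LocD pos g0 gh x) : seqD pos g0 gh x := by
  intro y Δ hy hΔ
  classical
  set e : (j : Fin q) → Evec (m j) := fun j => EuclideanSpace.single ⟨0, hm j⟩ (1:ℝ) with he
  have henorm : ∀ j, ‖e j‖ = 1 := fun j => by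
    rw [he]; simp [EuclideanSpace.norm_single]
  set w : ℕ → (j : Fin q) → Evec (m j) := fun k j =>
    if h : gh j (y k) + (Δ k j).2 ≠ 0 then unitv (gh j (y k) + (Δ k j).2) else e j with hw
  have hwnorm : ∀ k j, ‖w k j‖ = 1 := by
    intro k j
    rw [hw]
    by_cases h : gh j (y k) + (Δ k j).2 ≠ 0
    · simp only [dif_pos h]; exact unitv_norm h
    · simp only [dif_neg h]; exact henorm j
  have hmem : ∀ k, w k ∈ Set.pi Set.univ (fun j => Metric.closedBall (0 : Evec (m j)) 1) := by
    intro k j _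
    rw [Metric.mem_closedBall, dist_zero_right, hwnorm k j]
  have hcomp : IsCompact (Set.pi Set.univ fun j => Metric.closedBall (0 : Evec (m j)) 1) :=
    isCompact_univ_pi fun j => isCompact_closedBall _ _
  obtain ⟨wb, -, φ, hφ, hconv⟩ := hcomp.tendsto_subseq hmem
  have hWj : ∀ j, Tendsto (fun k => w k j) (atTop ⊓ 𝓟 (Set.range φ)) (𝓝 (wb j)) := by
    intro j
    exact tendsto_of_strictMono_range hφ (tendsto_pi_nhds.1 hconv j)
  have hWbnorm : ∀ j, ‖wb j‖ = 1 := by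
    intro j
    have h1 : Tendsto (fun l => ‖w (φ l) j‖) atTop (𝓝 ‖wb j‖) := (tendsto_pi_nhds.1 hconv j).norm
    have h2 : Tendsto (fun _ : ℕ => (1:ℝ)) atTop (𝓝 ‖wb j‖) := by
      refine h1.congr fun l => ?_
      rw [hwnorm]
    exact tendsto_nhds_unique h2 tendsto_const_nhds
  refine ⟨Set.range φ, w, wb, Set.infinite_range_of_injective hφ.injective, ⟨?_, ?_⟩, ?_⟩
  · intro k _ j _
    refine ⟨hwnorm k j, fun hne => ?_⟩
    rw [hw]; simp only [dif_pos hne]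
  · intro j _
    exact ⟨hWbnorm j, hWj j⟩
  · intro JB Jm Jp hJB hJm hJp hdep
    obtain ⟨δ, hδ, hball⟩ := hloc JB Jm Jp hJB hJm hJp wb (fun j _ => hWbnorm j) hdep
    have h1 : ∀ᶠ k in atTop ⊓ 𝓟 (Set.range φ), ‖y k - x‖ < δ := by
      have := Metric.tendsto_nhds.1 (hy.mono_left (inf_le_left (a := (atTop : Filter ℕ)) (b := 𝓟 (Set.range φ)))) δ hδ
      exact this.mono fun k hk => by rwa [dist_eq_norm] at hk
    have h2 : ∀ j, ∀ᶠ k in atTop ⊓ 𝓟 (Set.range φ),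
        (Jm j ∨ Jp j) → (‖w k j‖ = 1 ∧ ‖w k j - wb j‖ < δ) := by
      intro j
      have := Metric.tendsto_nhds.1 (hWj j) δ hδ
      exact this.mono fun k hk _ => ⟨hwnorm k j, by rwa [dist_eq_norm] at hk⟩
    have h2' := (eventually_all (ι := Fin q)).2 h2
    filter_upwards [h1, h2'] with k hk1 hk2
    exact hball (y k) hk1 (w k) hk2

lemma continuousAt_unitv {n p : ℕ} {f : Evec n → Evec p} (hf : Continuous f) {x : Evec n}
    (hx : f x ≠ 0) : ContinuousAt (fun u => unitv (f u)) x := by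
  have h1 : ContinuousAt (fun u => ‖f u‖⁻¹) x :=
    (hf.norm.continuousAt).inv₀ (norm_ne_zero_iff.2 hx)
  exact h1.smul hf.continuousAt

set_option maxHeartbeats 2000000 in
lemma lemM (pos : Bool) (g0 : Fin q → Evec n → ℝ) (gh : (j : Fin q) → Evec n → Evec (m j))
    (hg : ∀ j, ContDiff ℝ 1 fun x => (g0 j x, gh j x)) (xb : Evec n)
    (hseq : seqD pos g0 gh xb) :
    ∃ ε > (0:ℝ), ∀ x : Evec n, ‖x - xb‖ < ε → LocD pos g0 gh x := by
  classical
  have hcg0 : ∀ j, Continuous (g0 j) := fun j => continuous_fst.comp (hg j).continuous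
  have hcgh : ∀ j, Continuous (gh j) := fun j => continuous_snd.comp (hg j).continuous
  have hcd0 : ∀ j, ContDiff ℝ 1 (g0 j) := fun j => contDiff_fst.comp (hg j)
  have hcdh : ∀ j i, ContDiff ℝ 1 fun x => gh j x i := by
    intro j i
    have h := (ContinuousLinearMap.contDiff (n := 1)
      (EuclideanSpace.proj (𝕜 := ℝ) i)).comp (contDiff_snd.comp (hg j))
    exact h
  by_contra hcon
  push_neg at hcon
  choose X hX hnX using fun ℓ : ℕ => hcon (1/((ℓ:ℝ)+1)) (by positivity)
  have hnX' : ∀ ℓ, ∃ JB Jm Jp : Fin q → Prop,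
      (∀ j, JB j → memIB g0 gh (X ℓ) j) ∧ (∀ j, Jm j → memI0 g0 gh (X ℓ) j) ∧
      (∀ j, Jp j → memI0 g0 gh (X ℓ) j) ∧ ∃ wb : (j : Fin q) → Evec (m j),
      (∀ j, Jm j ∨ Jp j → ‖wb j‖ = 1) ∧ DepD pos g0 gh JB Jm Jp (X ℓ) wb ∧
      ∀ δ > (0:ℝ), ∃ u, ‖u - X ℓ‖ < δ ∧ ∃ ω : (j : Fin q) → Evec (m j),
        (∀ j, Jm j ∨ Jp j → ‖ω j‖ = 1 ∧ ‖ω j - wb j‖ < δ) ∧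
        ¬ linDepD g0 gh JB Jm Jp u ω := by
    intro ℓ
    have h := hnX ℓ
    unfold LocD at h
    push_neg at h
    exact h
  choose JB Jm Jp hJB hJm hJp wb hwbu hdep hbad using hnX'
  have hIBne : ∀ (z : Evec n) j, memIB g0 gh z j → gh j z ≠ 0 := by
    intro z j h h0
    exact h.1 ⟨by rw [h.2, h0, norm_zero], h0⟩
  -- a radius making the normalized gh stable for j ∈ JB ℓ
  have hδ' : ∀ ℓ, ∃ δ', 0 < δ' ∧ ∀ u, ‖u - X ℓ‖ < δ' → ∀ j, JB ℓ j →
      gh j u ≠ 0 ∧ ‖unitv (gh j u) - unitv (gh j (X ℓ))‖ < 1/((ℓ:ℝ)+1) := by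
    intro ℓ
    have hev : ∀ᶠ v in 𝓝 (X ℓ), ∀ j, JB ℓ j →
        gh j v ≠ 0 ∧ ‖unitv (gh j v) - unitv (gh j (X ℓ))‖ < 1/((ℓ:ℝ)+1) := by
      rw [eventually_all]
      intro j
      by_cases hj : JB ℓ j
      · have hne : gh j (X ℓ) ≠ 0 := hIBne _ j (hJB ℓ j hj)
        have h1 : ∀ᶠ v in 𝓝 (X ℓ), gh j v ≠ 0 := (hcgh j).continuousAt.eventually_ne hne
        have h2 : ∀ᶠ v in 𝓝 (X ℓ), ‖unitv (gh j v) - unitv (gh j (X ℓ))‖ < 1/((ℓ:ℝ)+1) := by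
          have ht := (continuousAt_unitv (hcgh j) hne)
          have h3 := Metric.tendsto_nhds.1 ht (1/((ℓ:ℝ)+1)) (by positivity)
          exact h3.mono fun v hv => by rwa [dist_eq_norm] at hv
        filter_upwards [h1, h2] with v hv1 hv2 _
        exact ⟨hv1, hv2⟩
      · exact Eventually.of_forall fun v hj' => absurd hj' hj
    obtain ⟨δ', hδ'1, hδ'2⟩ := Metric.eventually_nhds_iff.1 hev
    exact ⟨δ', hδ'1, fun v hv => hδ'2 (by rwa [dist_eq_norm])⟩
  choose δ' hδ'pos hδ'prop using hδ'
  have hδm : ∀ ℓ, 0 < min (δ' ℓ) (1/((ℓ:ℝ)+1)) := fun ℓ => lt_min (hδ'pos ℓ) (by positivity)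
  choose u hu ω hω hnl using fun ℓ => hbad ℓ _ (hδm ℓ)
  -- normalized coefficients
  have hco : ∀ ℓ, ∃ η a b : Fin q → ℝ,
      (∀ j, ¬ JB ℓ j → η j = 0) ∧ (∀ j, ¬ Jm ℓ j → a j = 0) ∧ (∀ j, ¬ Jp ℓ j → b j = 0) ∧
      (∑ j, (|η j| + |a j| + |b j|)) = 1 ∧ famComb g0 gh (X ℓ) (wb ℓ) η a b = 0 ∧
      (pos = true → (∀ j, 0 ≤ η j) ∧ (∀ j, 0 ≤ a j) ∧ (∀ j, 0 ≤ b j)) := by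
    intro ℓ
    obtain ⟨η, a, b, h1, h2, h3, h4, h5, h6⟩ := depD_elim (hdep ℓ)
    set s := ∑ j, (|η j| + |a j| + |b j|) with hsdef
    have hs0 : 0 ≤ s := Finset.sum_nonneg fun j _ => by positivity
    have hs : 0 < s := by
      rcases hs0.lt_or_eq with h | h
      · exact h
      · exfalso
        have hz := (Finset.sum_eq_zero_iff_of_nonneg (fun j _ => by positivity)).1 h.symm
        refine h4 fun j => ?_
        have hj := hz j (Finset.mem_univ j)
        have e1 : |η j| = 0 := by nlinarith [abs_nonneg (η j), abs_nonneg (a j), abs_nonneg (b j)]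
        have e2 : |a j| = 0 := by nlinarith [abs_nonneg (η j), abs_nonneg (a j), abs_nonneg (b j)]
        have e3 : |b j| = 0 := by nlinarith [abs_nonneg (η j), abs_nonneg (a j), abs_nonneg (b j)]
        exact ⟨abs_eq_zero.1 e1, abs_eq_zero.1 e2, abs_eq_zero.1 e3⟩
    refine ⟨fun j => s⁻¹ * η j, fun j => s⁻¹ * a j, fun j => s⁻¹ * b j, ?_, ?_, ?_, ?_, ?_, ?_⟩
    · intro j hj; show s⁻¹ * η j = 0; rw [h1 j hj, mul_zero]
    · intro j hj; show s⁻¹ * a j = 0; rw [h2 j hj, mul_zero]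
    · intro j hj; show s⁻¹ * b j = 0; rw [h3 j hj, mul_zero]
    · show (∑ j, (|s⁻¹ * η j| + |s⁻¹ * a j| + |s⁻¹ * b j|)) = 1
      have he : ∀ j ∈ Finset.univ, |s⁻¹ * η j| + |s⁻¹ * a j| + |s⁻¹ * b j|
          = s⁻¹ * (|η j| + |a j| + |b j|) := fun j _ => by
        rw [abs_mul, abs_mul, abs_mul, abs_of_pos (inv_pos.2 hs)]; ring
      rw [Finset.sum_congr rfl he, ← Finset.mul_sum, ← hsdef, inv_mul_cancel₀ hs.ne']
    · rw [famComb_smul, h5, smul_zero]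
    · intro hp
      obtain ⟨p1, p2, p3⟩ := h6 hp
      exact ⟨fun j => mul_nonneg (inv_pos.2 hs).le (p1 j),
             fun j => mul_nonneg (inv_pos.2 hs).le (p2 j),
             fun j => mul_nonneg (inv_pos.2 hs).le (p3 j)⟩
  choose η a b hsη hsa hsb hsum hfc hposc using hco
  -- stage 1 : constant triple of index sets
  obtain ⟨⟨JB₀, Jm₀, Jp₀⟩, ψ, hψ, hTc⟩ := exists_const_subseq (fun ℓ => (JB ℓ, Jm ℓ, Jp ℓ))
  have hTB : ∀ l, JB (ψ l) = JB₀ := fun l => congrArg (fun t => t.1) (hTc l)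
  have hTm : ∀ l, Jm (ψ l) = Jm₀ := fun l => congrArg (fun t => t.2.1) (hTc l)
  have hTp : ∀ l, Jp (ψ l) = Jp₀ := fun l => congrArg (fun t => t.2.2) (hTc l)
  -- stage 2 : compact extraction of all limit data
  set P : ℕ → (((j : Fin q) → Evec (m j)) × ((j : Fin q) → Evec (m j)) ×
      (Fin q → ℝ) × (Fin q → ℝ) × (Fin q → ℝ)) := fun l =>
    (fun j => if JB₀ j then unitv (gh j (X (ψ l))) else 0,
     fun j => if Jm₀ j ∨ Jp₀ j then wb (ψ l) j else 0,
     η (ψ l), a (ψ l), b (ψ l)) with hP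
  have habs : ∀ (c : ℕ → Fin q → ℝ), (∀ ℓ j, |c ℓ j| ≤ |η ℓ j| + |a ℓ j| + |b ℓ j|) →
      ∀ ℓ, c ℓ ∈ Metric.closedBall (0 : Fin q → ℝ) 1 := by
    intro c hc ℓ
    rw [Metric.mem_closedBall, dist_zero_right]
    rw [pi_norm_le_iff_of_nonneg zero_le_one]
    intro j
    rw [Real.norm_eq_abs]
    calc |c ℓ j| ≤ |η ℓ j| + |a ℓ j| + |b ℓ j| := hc ℓ j
    _ ≤ ∑ i, (|η ℓ i| + |a ℓ i| + |b ℓ i|) :=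
        Finset.single_le_sum (f := fun i => |η ℓ i| + |a ℓ i| + |b ℓ i|)
          (fun i _ => by positivity) (Finset.mem_univ j)
    _ = 1 := hsum ℓ
  have hKc : IsCompact ((Set.pi Set.univ fun j => Metric.closedBall (0 : Evec (m j)) 1) ×ˢ
      ((Set.pi Set.univ fun j => Metric.closedBall (0 : Evec (m j)) 1) ×ˢ
      ((Metric.closedBall (0 : Fin q → ℝ) 1) ×ˢ ((Metric.closedBall (0 : Fin q → ℝ) 1) ×ˢ
        (Metric.closedBall (0 : Fin q → ℝ) 1))))) :=
    ((isCompact_univ_pi fun j => isCompact_closedBall _ _).prod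
      ((isCompact_univ_pi fun j => isCompact_closedBall _ _).prod
        ((isCompact_closedBall _ _).prod ((isCompact_closedBall _ _).prod
          (isCompact_closedBall _ _)))))
  have hPmem : ∀ l, P l ∈ ((Set.pi Set.univ fun j => Metric.closedBall (0 : Evec (m j)) 1) ×ˢ
      ((Set.pi Set.univ fun j => Metric.closedBall (0 : Evec (m j)) 1) ×ˢ
      ((Metric.closedBall (0 : Fin q → ℝ) 1) ×ˢ ((Metric.closedBall (0 : Fin q → ℝ) 1) ×ˢ
        (Metric.closedBall (0 : Fin q → ℝ) 1))))) := by
    intro l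
    refine ⟨?_, ?_, ?_, ?_, ?_⟩
    · intro j _
      rw [Metric.mem_closedBall, dist_zero_right]
      by_cases hj : JB₀ j
      · simp only [hP, if_pos hj]
        rw [unitv_norm (hIBne _ j (hJB (ψ l) j (by rw [hTB l]; exact hj)))]
      · simp only [hP, if_neg hj, norm_zero]
        exact zero_le_one
    · intro j _
      rw [Metric.mem_closedBall, dist_zero_right]
      by_cases hj : Jm₀ j ∨ Jp₀ j
      · simp only [hP, if_pos hj]
        have hj' : Jm (ψ l) j ∨ Jp (ψ l) j := by rw [hTm l, hTp l]; exact hj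
        rw [hwbu (ψ l) j hj']
      · simp only [hP, if_neg hj, norm_zero]
        exact zero_le_one
    · exact habs (fun ℓ => η ℓ) (fun ℓ j => by nlinarith [abs_nonneg (a ℓ j), abs_nonneg (b ℓ j)]) (ψ l)
    · exact habs (fun ℓ => a ℓ) (fun ℓ j => by nlinarith [abs_nonneg (η ℓ j), abs_nonneg (b ℓ j)]) (ψ l)
    · exact habs (fun ℓ => b ℓ) (fun ℓ j => by nlinarith [abs_nonneg (η ℓ j), abs_nonneg (a ℓ j)]) (ψ l)
  obtain ⟨L, -, φ₂, hφ₂, hconv⟩ := hKc.tendsto_subseq hPmem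
  obtain ⟨ν, W, ηL, aL, bL⟩ := L
  set φ : ℕ → ℕ := ψ ∘ φ₂ with hφdef
  have hφ : StrictMono φ := hψ.comp hφ₂
  have hTBφ : ∀ l, JB (φ l) = JB₀ := fun l => hTB (φ₂ l)
  have hTmφ : ∀ l, Jm (φ l) = Jm₀ := fun l => hTm (φ₂ l)
  have hTpφ : ∀ l, Jp (φ l) = Jp₀ := fun l => hTp (φ₂ l)
  have hJBφ : ∀ l j, (JB (φ l) j ↔ JB₀ j) := fun l j => by rw [hTBφ l]
  have hJmφ : ∀ l j, (Jm (φ l) j ↔ Jm₀ j) := fun l j => by rw [hTmφ l]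
  have hJpφ : ∀ l j, (Jp (φ l) j ↔ Jp₀ j) := fun l j => by rw [hTpφ l]
  -- limits of the extracted data
  have hc1 : Tendsto (fun l => (P (φ₂ l)).1) atTop (𝓝 ν) := (continuous_fst.tendsto _).comp hconv
  have hc2 : Tendsto (fun l => (P (φ₂ l)).2.1) atTop (𝓝 W) :=
    ((continuous_fst.comp continuous_snd).tendsto _).comp hconv
  have hcη : Tendsto (fun l => η (φ l)) atTop (𝓝 ηL) :=
    ((continuous_fst.comp (continuous_snd.comp continuous_snd)).tendsto _).comp hconv
  have hca : Tendsto (fun l => a (φ l)) atTop (𝓝 aL) :=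
    ((continuous_fst.comp (continuous_snd.comp (continuous_snd.comp continuous_snd))).tendsto _).comp hconv
  have hcb : Tendsto (fun l => b (φ l)) atTop (𝓝 bL) :=
    ((continuous_snd.comp (continuous_snd.comp (continuous_snd.comp continuous_snd))).tendsto _).comp hconv
  have hν : ∀ j, JB₀ j → Tendsto (fun l => unitv (gh j (X (φ l)))) atTop (𝓝 (ν j)) := by
    intro j hj
    have h := tendsto_pi_nhds.1 hc1 j
    simp only [hP, if_pos hj] at h
    exact h
  have hWlim : ∀ j, Jm₀ j ∨ Jp₀ j → Tendsto (fun l => wb (φ l) j) atTop (𝓝 (W j)) := by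
    intro j hj
    have h := tendsto_pi_nhds.1 hc2 j
    simp only [hP, if_pos hj] at h
    exact h
  have hηj : ∀ j, Tendsto (fun l => η (φ l) j) atTop (𝓝 (ηL j)) := fun j => tendsto_pi_nhds.1 hcη j
  have haj : ∀ j, Tendsto (fun l => a (φ l) j) atTop (𝓝 (aL j)) := fun j => tendsto_pi_nhds.1 hca j
  have hbj : ∀ j, Tendsto (fun l => b (φ l) j) atTop (𝓝 (bL j)) := fun j => tendsto_pi_nhds.1 hcb j
  -- limits of the points
  have hfrac : ∀ l : ℕ, 1/((φ l : ℝ)+1) ≤ 1/((l:ℝ)+1) := by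
    intro l
    apply one_div_le_one_div_of_le (by positivity)
    have h1 : l ≤ φ l := hφ.le_apply
    have : ((l:ℝ)+1) ≤ ((φ l : ℝ)+1) := by exact_mod_cast Nat.add_le_add_right h1 1
    exact this
  have hXlim : Tendsto (fun l => X (φ l)) atTop (𝓝 xb) := by
    refine tendsto_close tendsto_const_nhds fun l => ?_
    exact le_trans (hX (φ l)).le (hfrac l)
  have hulim : Tendsto (fun l => u (φ l)) atTop (𝓝 xb) := by
    refine tendsto_close hXlim fun l => ?_
    exact le_trans (le_trans (hu (φ l)).le (min_le_right _ _)) (hfrac l)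
  -- index-set inclusions at xb
  have hJm0 : ∀ j, Jm₀ j → memI0 g0 gh xb j := by
    intro j hj
    have hall : ∀ l, memI0 g0 gh (X (φ l)) j := fun l => hJm (φ l) j ((hJmφ l j).2 hj)
    constructor
    · have h1 : Tendsto (fun l => g0 j (X (φ l))) atTop (𝓝 (g0 j xb)) :=
        ((hcg0 j).tendsto xb).comp hXlim
      have h2 : (fun l => g0 j (X (φ l))) = fun _ => (0:ℝ) := funext fun l => (hall l).1
      rw [h2] at h1
      exact tendsto_nhds_unique h1 tendsto_const_nhds
    · have h1 : Tendsto (fun l => gh j (X (φ l))) atTop (𝓝 (gh j xb)) :=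
        ((hcgh j).tendsto xb).comp hXlim
      have h2 : (fun l => gh j (X (φ l))) = fun _ => (0:Evec (m j)) := funext fun l => (hall l).2
      rw [h2] at h1
      exact tendsto_nhds_unique h1 tendsto_const_nhds
  have hJp0 : ∀ j, Jp₀ j → memI0 g0 gh xb j := by
    intro j hj
    have hall : ∀ l, memI0 g0 gh (X (φ l)) j := fun l => hJp (φ l) j ((hJpφ l j).2 hj)
    constructor
    · have h1 : Tendsto (fun l => g0 j (X (φ l))) atTop (𝓝 (g0 j xb)) :=
        ((hcg0 j).tendsto xb).comp hXlim
      have h2 : (fun l => g0 j (X (φ l))) = fun _ => (0:ℝ) := funext fun l => (hall l).1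
      rw [h2] at h1
      exact tendsto_nhds_unique h1 tendsto_const_nhds
    · have h1 : Tendsto (fun l => gh j (X (φ l))) atTop (𝓝 (gh j xb)) :=
        ((hcgh j).tendsto xb).comp hXlim
      have h2 : (fun l => gh j (X (φ l))) = fun _ => (0:Evec (m j)) := funext fun l => (hall l).2
      rw [h2] at h1
      exact tendsto_nhds_unique h1 tendsto_const_nhds
  have hJB0eq : ∀ j, JB₀ j → g0 j xb = ‖gh j xb‖ := by
    intro j hj
    have h1 : Tendsto (fun l => g0 j (X (φ l))) atTop (𝓝 (g0 j xb)) :=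
      ((hcg0 j).tendsto xb).comp hXlim
    have h2 : Tendsto (fun l => ‖gh j (X (φ l))‖) atTop (𝓝 ‖gh j xb‖) :=
      (((hcgh j).tendsto xb).comp hXlim).norm
    have h3 : (fun l => g0 j (X (φ l))) = fun l => ‖gh j (X (φ l))‖ :=
      funext fun l => (hJB (φ l) j ((hJBφ l j).2 hj)).2
    rw [h3] at h1
    exact tendsto_nhds_unique h1 h2
  have hdicho : ∀ j, JB₀ j → memI0 g0 gh xb j ∨ memIB g0 gh xb j := by
    intro j hj
    by_cases h : g0 j xb = 0 ∧ gh j xb = 0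
    · exact Or.inl h
    · exact Or.inr ⟨h, hJB0eq j hj⟩
  have hdisj : ∀ j, JB₀ j → ¬(Jm₀ j ∨ Jp₀ j) := by
    intro j hj hc
    have hB := hJB (φ 0) j ((hJBφ 0 j).2 hj)
    rcases hc with hc | hc
    · exact hB.1 (hJm (φ 0) j ((hJmφ 0 j).2 hc))
    · exact hB.1 (hJp (φ 0) j ((hJpφ 0 j).2 hc))
  have hνIB : ∀ j, JB₀ j → memIB g0 gh xb j → ν j = unitv (gh j xb) := by
    intro j hj hB
    have hne := hIBne xb j hB
    have h1 : Tendsto (fun l => unitv (gh j (X (φ l)))) atTop (𝓝 (unitv (gh j xb))) :=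
      ((continuousAt_unitv (hcgh j) hne).tendsto).comp hXlim
    exact tendsto_nhds_unique (hν j hj) h1
  -- limits of coefficients : supports, sum, sign
  have hηsupp : ∀ j, ¬ JB₀ j → ηL j = 0 := by
    intro j hj
    have h1 : (fun l => η (φ l) j) = fun _ => (0:ℝ) :=
      funext fun l => hsη (φ l) j (fun hc => hj ((hJBφ l j).1 hc))
    have h2 := hηj j
    rw [h1] at h2
    exact tendsto_nhds_unique h2 tendsto_const_nhds
  have hasupp : ∀ j, ¬ Jm₀ j → aL j = 0 := by
    intro j hj
    have h1 : (fun l => a (φ l) j) = fun _ => (0:ℝ) :=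
      funext fun l => hsa (φ l) j (fun hc => hj ((hJmφ l j).1 hc))
    have h2 := haj j
    rw [h1] at h2
    exact tendsto_nhds_unique h2 tendsto_const_nhds
  have hbsupp : ∀ j, ¬ Jp₀ j → bL j = 0 := by
    intro j hj
    have h1 : (fun l => b (φ l) j) = fun _ => (0:ℝ) :=
      funext fun l => hsb (φ l) j (fun hc => hj ((hJpφ l j).1 hc))
    have h2 := hbj j
    rw [h1] at h2
    exact tendsto_nhds_unique h2 tendsto_const_nhds
  have hsumL : (∑ j, (|ηL j| + |aL j| + |bL j|)) = 1 := by
    have hT : Tendsto (fun l => ∑ j, (|η (φ l) j| + |a (φ l) j| + |b (φ l) j|)) atTop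
        (𝓝 (∑ j, (|ηL j| + |aL j| + |bL j|))) :=
      tendsto_finset_sum _ fun j _ => (((hηj j).abs.add (haj j).abs).add (hbj j).abs)
    have h1 : (fun l => ∑ j, (|η (φ l) j| + |a (φ l) j| + |b (φ l) j|)) = fun _ => (1:ℝ) :=
      funext fun l => hsum (φ l)
    rw [h1] at hT
    exact tendsto_nhds_unique hT tendsto_const_nhds
  have hposL : pos = true → (∀ j, 0 ≤ ηL j) ∧ (∀ j, 0 ≤ aL j) ∧ (∀ j, 0 ≤ bL j) := by
    intro hp
    refine ⟨fun j => ge_of_tendsto' (hηj j) fun l => (hposc (φ l) hp).1 j,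
            fun j => ge_of_tendsto' (haj j) fun l => (hposc (φ l) hp).2.1 j,
            fun j => ge_of_tendsto' (hbj j) fun l => (hposc (φ l) hp).2.2 j⟩
  -- limit of the vanishing combinations
  have hfcL : (∑ j, (ηL j • dgT (g0 j) (gh j) xb (1, -ν j) +
      aL j • dgT (g0 j) (gh j) xb (1, -(W j)) + bL j • dgT (g0 j) (gh j) xb (1, W j))) = 0 := by
    have hz : Tendsto (fun l => famComb g0 gh (X (φ l)) (wb (φ l)) (η (φ l)) (a (φ l)) (b (φ l)))
        atTop (𝓝 0) := by
      have heq : (fun l => famComb g0 gh (X (φ l)) (wb (φ l)) (η (φ l)) (a (φ l)) (b (φ l)))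
          = fun _ => (0 : Evec n) := funext fun l => hfc (φ l)
      rw [heq]; exact tendsto_const_nhds
    have hconv2 : Tendsto
        (fun l => famComb g0 gh (X (φ l)) (wb (φ l)) (η (φ l)) (a (φ l)) (b (φ l))) atTop
        (𝓝 (∑ j, (ηL j • dgT (g0 j) (gh j) xb (1, -ν j) +
          aL j • dgT (g0 j) (gh j) xb (1, -(W j)) + bL j • dgT (g0 j) (gh j) xb (1, W j)))) := by
      simp only [famComb]
      apply tendsto_finset_sum
      intro j _
      refine Tendsto.add (Tendsto.add ?_ ?_) ?_
      · by_cases hj : JB₀ j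
        · exact (hηj j).smul (tendsto_dgT (hcd0 j) (hcdh j) hXlim
            (tendsto_const_nhds.prodMk_nhds (hν j hj).neg))
        · have hz1 : (fun l => η (φ l) j • dgT (g0 j) (gh j) (X (φ l))
              (1, -unitv (gh j (X (φ l))))) = fun _ => (0:Evec n) :=
            funext fun l => by
              rw [hsη (φ l) j (fun hc => hj ((hJBφ l j).1 hc)), zero_smul]
          rw [hz1, hηsupp j hj, zero_smul]
          exact tendsto_const_nhds
      · by_cases hj : Jm₀ j
        · exact (haj j).smul (tendsto_dgT (hcd0 j) (hcdh j) hXlim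
            (tendsto_const_nhds.prodMk_nhds (hWlim j (Or.inl hj)).neg))
        · have hz1 : (fun l => a (φ l) j • dgT (g0 j) (gh j) (X (φ l)) (1, -(wb (φ l) j)))
              = fun _ => (0:Evec n) :=
            funext fun l => by
              rw [hsa (φ l) j (fun hc => hj ((hJmφ l j).1 hc)), zero_smul]
          rw [hz1, hasupp j hj, zero_smul]
          exact tendsto_const_nhds
      · by_cases hj : Jp₀ j
        · exact (hbj j).smul (tendsto_dgT (hcd0 j) (hcdh j) hXlim
            (tendsto_const_nhds.prodMk_nhds (hWlim j (Or.inr hj))))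
        · have hz1 : (fun l => b (φ l) j • dgT (g0 j) (gh j) (X (φ l)) (1, wb (φ l) j))
              = fun _ => (0:Evec n) :=
            funext fun l => by
              rw [hsb (φ l) j (fun hc => hj ((hJpφ l j).1 hc)), zero_smul]
          rw [hz1, hbsupp j hj, zero_smul]
          exact tendsto_const_nhds
    exact tendsto_nhds_unique hconv2 hz
  -- the limiting family, reorganized as an admissible triple at xb
  set JB' : Fin q → Prop := fun j => JB₀ j ∧ memIB g0 gh xb j with hJB'
  set Jm' : Fin q → Prop := fun j => Jm₀ j ∨ (JB₀ j ∧ memI0 g0 gh xb j) with hJm'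
  set wb' : (j : Fin q) → Evec (m j) := fun j => if JB₀ j then ν j else W j with hwb'
  set η' : Fin q → ℝ := fun j => if memIB g0 gh xb j then ηL j else 0 with hη'
  set a' : Fin q → ℝ := fun j => if JB₀ j then (if memI0 g0 gh xb j then ηL j else 0) else aL j
    with ha'
  have hfam' : famComb g0 gh xb wb' η' a' bL = 0 := by
    rw [← hfcL]
    unfold famComb
    refine Finset.sum_congr rfl fun j _ => ?_
    by_cases hj : JB₀ j
    · have haL0 : aL j = 0 := hasupp j (fun hm' => hdisj j hj (Or.inl hm'))
      have hbL0 : bL j = 0 := hbsupp j (fun hp => hdisj j hj (Or.inr hp))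
      rcases hdicho j hj with h0 | hB
      · have hnB : ¬ memIB g0 gh xb j := fun hBx => hBx.1 h0
        simp only [hη', ha', hwb', if_pos hj, if_pos h0, if_neg hnB, haL0, hbL0, zero_smul,
          add_zero, zero_add]
      · have hn0 : ¬ memI0 g0 gh xb j := hB.1
        simp only [hη', ha', hwb', if_pos hj, if_pos hB, if_neg hn0, haL0, hbL0, zero_smul,
          add_zero, zero_add, hνIB j hj hB]
    · have hη0 : ηL j = 0 := hηsupp j hj
      simp only [hη', ha', hwb', if_neg hj, hη0, ite_self, zero_smul, zero_add]
  have hDep' : DepD pos g0 gh JB' Jm' Jp₀ xb wb' := by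
    refine depD_intro ?_ ?_ ?_ ?_ hfam' ?_
    · intro j hj
      by_cases hB : memIB g0 gh xb j
      · have hnb : ¬ JB₀ j := fun hb => hj ⟨hb, hB⟩
        simp only [hη', if_pos hB]
        exact hηsupp j hnb
      · simp only [hη', if_neg hB]
        
    · intro j hj
      by_cases hb : JB₀ j
      · have h0 : ¬ memI0 g0 gh xb j := fun h0 => hj (Or.inr ⟨hb, h0⟩)
        simp only [ha', if_pos hb, if_neg h0]
      · have hm' : ¬ Jm₀ j := fun hm' => hj (Or.inl hm')
        simp only [ha', if_neg hb]
        exact hasupp j hm'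
    · exact hbsupp
    · intro hall
      have hzz : ∀ j, ηL j = 0 ∧ aL j = 0 ∧ bL j = 0 := by
        intro j
        obtain ⟨e1, e2, e3⟩ := hall j
        refine ⟨?_, ?_, e3⟩
        · by_cases hj : JB₀ j
          · rcases hdicho j hj with h0 | hB
            · have : a' j = ηL j := by simp only [ha', if_pos hj, if_pos h0]
              rw [← this]; exact e2
            · have : η' j = ηL j := by simp only [hη', if_pos hB]
              rw [← this]; exact e1
          · exact hηsupp j hj
        · by_cases hj : JB₀ j
          · exact hasupp j (fun hm' => hdisj j hj (Or.inl hm'))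
          · have : a' j = aL j := by simp only [ha', if_neg hj]
            rw [← this]; exact e2
      have hs1 : (∑ j, (|ηL j| + |aL j| + |bL j|)) = 0 :=
        Finset.sum_eq_zero fun j _ => by
          rw [(hzz j).1, (hzz j).2.1, (hzz j).2.2]; simp
      rw [hsumL] at hs1
      norm_num at hs1
    · intro hp
      obtain ⟨p1, p2, p3⟩ := hposL hp
      refine ⟨fun j => ?_, fun j => ?_, p3⟩
      · by_cases hB : memIB g0 gh xb j
        · simp only [hη', if_pos hB]; exact p1 j
        · simp only [hη', if_neg hB]; exact le_rfl
      · by_cases hb : JB₀ j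
        · by_cases h0 : memI0 g0 gh xb j
          · simp only [ha', if_pos hb, if_pos h0]; exact p1 j
          · simp only [ha', if_pos hb, if_neg h0]; exact le_rfl
        · simp only [ha', if_neg hb]; exact p2 j
  -- feed the sequence u ∘ φ with suitable perturbations into seq-CPLD/CRCQ at xb
  have huprop : ∀ l j, JB₀ j → gh j (u (φ l)) ≠ 0 ∧
      ‖unitv (gh j (u (φ l))) - unitv (gh j (X (φ l)))‖ < 1/((φ l : ℝ)+1) :=
    fun l j hj => hδ'prop (φ l) (u (φ l)) ((hu (φ l)).trans_le (min_le_left _ _)) j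
      ((hJBφ l j).2 hj)
  have hμν : ∀ j, JB₀ j → Tendsto (fun l => unitv (gh j (u (φ l)))) atTop (𝓝 (ν j)) := by
    intro j hj
    refine tendsto_close (hν j hj) fun l => ?_
    exact le_trans (huprop l j hj).2.le (hfrac l)
  have hωW : ∀ j, Jm₀ j ∨ Jp₀ j → Tendsto (fun l => ω (φ l) j) atTop (𝓝 (W j)) := by
    intro j hj
    refine tendsto_close (hWlim j hj) fun l => ?_
    have hj' : Jm (φ l) j ∨ Jp (φ l) j := by
      rcases hj with hj | hj
      · exact Or.inl ((hJmφ l j).2 hj)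
      · exact Or.inr ((hJpφ l j).2 hj)
    exact le_trans (le_trans (hω (φ l) j hj').2.le (min_le_right _ _)) (hfrac l)
  have hωn : ∀ l j, Jm₀ j ∨ Jp₀ j → ‖ω (φ l) j‖ = 1 := by
    intro l j hj
    have hj' : Jm (φ l) j ∨ Jp (φ l) j := by
      rcases hj with hj | hj
      · exact Or.inl ((hJmφ l j).2 hj)
      · exact Or.inr ((hJpφ l j).2 hj)
    exact (hω (φ l) j hj').1
  set t : ℕ → ℝ := fun l => 1/((l:ℝ)+1) with htdef
  have htpos : ∀ l, 0 < t l := fun l => by positivity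
  set Δ : ℕ → (j : Fin q) → ℝ × Evec (m j) := fun l j =>
    if Jm₀ j ∨ Jp₀ j then ((0:ℝ), t l • ω (φ l) j - gh j (u (φ l))) else 0 with hΔdef
  have hΔ0 : ∀ j, memI0 g0 gh xb j ∨ memIB g0 gh xb j → Tendsto (fun l => Δ l j) atTop (𝓝 0) := by
    intro j _
    by_cases hj : Jm₀ j ∨ Jp₀ j
    · have hgh0 : gh j xb = 0 := (hj.elim (hJm0 j) (hJp0 j)).2
      have ha : Tendsto (fun l => t l • ω (φ l) j) atTop (𝓝 0) := by
        apply squeeze_zero_norm (a := t)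
        · intro l
          exact le_of_eq (by
            rw [norm_smul, hωn l j hj, mul_one, Real.norm_eq_abs, abs_of_pos (htpos l)])
        · exact tendsto_one_div_add_atTop_nhds_zero_nat
      have hb : Tendsto (fun l => gh j (u (φ l))) atTop (𝓝 0) := by
        have h := ((hcgh j).tendsto xb).comp hulim
        rwa [hgh0] at h
      have h2 : Tendsto (fun l => t l • ω (φ l) j - gh j (u (φ l))) atTop
          (𝓝 (0 : Evec (m j))) := by simpa using ha.sub hb
      have heq : (fun l => Δ l j) = fun l => (((0:ℝ), t l • ω (φ l) j - gh j (u (φ l))) :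
          ℝ × Evec (m j)) := funext fun l => by simp only [hΔdef, if_pos hj]
      rw [heq]
      exact tendsto_const_nhds.prodMk_nhds h2
    · have heq : (fun l => Δ l j) = fun _ => (0 : ℝ × Evec (m j)) :=
        funext fun l => by simp only [hΔdef, if_neg hj]
      rw [heq]
      exact tendsto_const_nhds
  obtain ⟨I, w, wbS, hIinf, ⟨hE1, hE2⟩, hImp⟩ := hseq (fun l => u (φ l)) Δ hulim hΔ0
  have hwval1 : ∀ k ∈ I, ∀ j, Jm₀ j ∨ Jp₀ j → w k j = ω (φ k) j := by
    intro k hk j hj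
    have hj0 : memI0 g0 gh xb j := hj.elim (hJm0 j) (hJp0 j)
    have h2 := (hE1 k hk j hj0).2
    have harg : gh j (u (φ k)) + (Δ k j).2 = t k • ω (φ k) j := by
      simp only [hΔdef, if_pos hj]
      abel
    have hωne : ω (φ k) j ≠ 0 := by
      intro h0
      have := hωn k j hj
      rw [h0, norm_zero] at this
      norm_num at this
    have hne : gh j (u (φ k)) + (Δ k j).2 ≠ 0 := by
      rw [harg]
      exact smul_ne_zero (htpos k).ne' hωne
    rw [h2 hne, harg, unitv_smul_pos (htpos k), unitv_of_norm_one (hωn k j hj)]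
  have hwval2 : ∀ k ∈ I, ∀ j, JB₀ j → memI0 g0 gh xb j → w k j = unitv (gh j (u (φ k))) := by
    intro k hk j hj hj0
    have h2 := (hE1 k hk j hj0).2
    have hΔz : (Δ k j).2 = 0 := by simp only [hΔdef, if_neg (hdisj j hj)]; rfl
    have hne : gh j (u (φ k)) + (Δ k j).2 ≠ 0 := by
      rw [hΔz, add_zero]
      exact (huprop k j hj).1
    rw [h2 hne, hΔz, add_zero]
  haveI hNB := atTop_inf_principal_neBot hIinf
  have hIev : ∀ᶠ k in atTop ⊓ 𝓟 I, k ∈ I :=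
    eventually_inf_principal.2 (Eventually.of_forall fun k hk => hk)
  have hwbS1 : ∀ j, Jm₀ j ∨ Jp₀ j → wbS j = W j := by
    intro j hj
    have hj0 : memI0 g0 gh xb j := hj.elim (hJm0 j) (hJp0 j)
    have h2 := (hE2 j hj0).2
    have h3 : Tendsto (fun k => w k j) (atTop ⊓ 𝓟 I) (𝓝 (W j)) := by
      refine Tendsto.congr' ?_ ((hωW j hj).mono_left inf_le_left)
      exact hIev.mono fun k hk => (hwval1 k hk j hj).symm
    exact tendsto_nhds_unique h2 h3
  have hwbS2 : ∀ j, JB₀ j → memI0 g0 gh xb j → wbS j = ν j := by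
    intro j hj hj0
    have h2 := (hE2 j hj0).2
    have h3 : Tendsto (fun k => w k j) (atTop ⊓ 𝓟 I) (𝓝 (ν j)) := by
      refine Tendsto.congr' ?_ ((hμν j hj).mono_left inf_le_left)
      exact hIev.mono fun k hk => (hwval2 k hk j hj hj0).symm
    exact tendsto_nhds_unique h2 h3
  have hDepS : DepD pos g0 gh JB' Jm' Jp₀ xb wbS := by
    refine depD_congr_w (w := wb') ?_ hDep'
    intro j hj
    rcases hj with hj | hj
    · rcases hj with hj | ⟨hj1, hj2⟩
      · have hnB : ¬ JB₀ j := fun hB => hdisj j hB (Or.inl hj)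
        simp only [hwb', if_neg hnB]
        exact (hwbS1 j (Or.inl hj)).symm
      · simp only [hwb', if_pos hj1]
        exact (hwbS2 j hj1 hj2).symm
    · have hnB : ¬ JB₀ j := fun hB => hdisj j hB (Or.inr hj)
      simp only [hwb', if_neg hnB]
      exact (hwbS1 j (Or.inr hj)).symm
  have hev := hImp JB' Jm' Jp₀ (fun j hj => hj.2)
    (fun j hj => hj.elim (hJm0 j) (fun h => h.2)) hJp0 hDepS
  obtain ⟨k, hkI, hlin⟩ := exists_in_of_eventually hIinf hev
  obtain ⟨ηt, at', bt, hts1, hts2, hts3, htnz, htfc⟩ := hlin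
  -- transfer the dependence back to the original family at u (φ k)
  refine hnl (φ k) ?_
  have hgoal : linDepD g0 gh JB₀ Jm₀ Jp₀ (u (φ k)) (ω (φ k)) := by
    refine ⟨(fun j => if JB₀ j then (if memIB g0 gh xb j then ηt j else at' j) else 0),
            (fun j => if JB₀ j then 0 else at' j), bt, ?_, ?_, ?_, ?_, ?_⟩
    · intro j hj; simp only [if_neg hj]
    · intro j hj
      by_cases hb : JB₀ j
      · simp only [if_pos hb]
      · simp only [if_neg hb]
        exact hts2 j (fun hc => hc.elim hj (fun h => hb h.1))
    · intro j hj
      exact hts3 j hj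
    · intro hall
      refine htnz fun j => ?_
      obtain ⟨e1, e2, e3⟩ := hall j
      refine ⟨?_, ?_, e3⟩
      · by_cases hj : JB₀ j
        · rcases hdicho j hj with h0 | hB
          · exact hts1 j (fun hB' => hB'.2.1 h0)
          · simp only [if_pos hj, if_pos hB] at e1
            exact e1
        · exact hts1 j (fun hc => hj hc.1)
      · by_cases hj : JB₀ j
        · rcases hdicho j hj with h0 | hB
          · have hnB : ¬ memIB g0 gh xb j := fun hBx => hBx.1 h0
            simp only [if_pos hj, if_neg hnB] at e1
            exact e1
          · exact hts2 j (fun hc => hc.elim (fun hm' => hdisj j hj (Or.inl hm')) (fun h => hB.1 h.2))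
        · simp only [if_neg hj] at e2
          exact e2
    · rw [← htfc]
      unfold famComb
      refine Finset.sum_congr rfl fun j _ => ?_
      by_cases hj : JB₀ j
      · have hbt0 : bt j = 0 := hts3 j (fun hp => hdisj j hj (Or.inr hp))
        rcases hdicho j hj with h0 | hB
        · have hnB : ¬ memIB g0 gh xb j := fun hBx => hBx.1 h0
          have hηt0 : ηt j = 0 := hts1 j (fun hB' => hB'.2.1 h0)
          have hwk : w k j = unitv (gh j (u (φ k))) := hwval2 k hkI j hj h0
          simp only [if_pos hj, if_neg hnB, hbt0, hηt0, zero_smul, add_zero, zero_add, hwk]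
        · have hat0 : at' j = 0 := hts2 j (fun hc =>
            hc.elim (fun hm' => hdisj j hj (Or.inl hm')) (fun h => hB.1 h.2))
          simp only [if_pos hj, if_pos hB, hbt0, hat0, zero_smul, add_zero, zero_add]
      · have hηt0 : ηt j = 0 := hts1 j (fun hc => hj hc.1)
        by_cases hz : at' j = 0 ∧ bt j = 0
        · simp only [if_neg hj, hηt0, hz.1, hz.2, zero_smul, add_zero, zero_add]
        · have hor : Jm₀ j ∨ Jp₀ j := by
            rcases not_and_or.1 hz with h | h
            · have h2 : Jm' j := by
                by_contra hc
                exact h (hts2 j hc)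
              rcases h2 with h2 | h2
              · exact Or.inl h2
              · exact absurd h2.1 hj
            · refine Or.inr ?_
              by_contra hc
              exact h (hts3 j hc)
          have hwk : w k j = ω (φ k) j := hwval1 k hkI j hor
          simp only [if_neg hj, hηt0, zero_smul, zero_add, hwk]
  have hre : linDepD g0 gh (JB (φ k)) (Jm (φ k)) (Jp (φ k)) (u (φ k)) (ω (φ k)) := by
    rw [hTBφ k, hTmφ k, hTpφ k]
    exact hgoal
  exact hre

end Robust

/-- (Robustness.)  If `xb ∈ F` satisfies seq-CPLD (respectively,
seq-CRCQ), then there is a neighborhood `V` of `xb` such that every `x ∈ V ∩ F` also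
satisfies seq-CPLD (respectively, seq-CRCQ), the index sets being taken relative to `x`. -/
theorem stmt15 {n q : ℕ} (m : Fin q → ℕ) (hm : ∀ j, 1 ≤ m j)
    (f : Evec n → ℝ) (hf : ContDiff ℝ 1 f)
    (g0 : Fin q → Evec n → ℝ) (gh : (j : Fin q) → Evec n → Evec (m j))
    (hg : ∀ j, ContDiff ℝ 1 fun x => (g0 j x, gh j x))
    (xb : Evec n) (hxb : ∀ j, ‖gh j xb‖ ≤ g0 j xb) :
    (seqCPLD g0 gh xb → ∃ ε > (0:ℝ), ∀ x : Evec n, ‖x - xb‖ < ε →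
      (∀ j, ‖gh j x‖ ≤ g0 j x) → seqCPLD g0 gh x) ∧
    (seqCRCQ g0 gh xb → ∃ ε > (0:ℝ), ∀ x : Evec n, ‖x - xb‖ < ε →
      (∀ j, ‖gh j x‖ ≤ g0 j x) → seqCRCQ g0 gh x) := by
  constructor
  · intro hs
    obtain ⟨ε, hε, hloc⟩ := lemM true g0 gh hg xb (seqD_true_iff.2 hs)
    exact ⟨ε, hε, fun x hx _ => seqD_true_iff.1 (lemA hm true g0 gh x (hloc x hx))⟩
  · intro hs
    obtain ⟨ε, hε, hloc⟩ := lemM false g0 gh hg xb (seqD_false_iff.2 hs)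
    exact ⟨ε, hε, fun x hx _ => seqD_false_iff.1 (lemA hm false g0 gh x (hloc x hx))⟩
end
end

section
/- Let {x^k} ⊆ ℝ^n be a bounded sequence, and suppose there are sequences d^k ∈ ℝ^n with d^k → 0, symmetric matrices M^k ∈ ℝ^{n×n} with γ₁‖z‖² ≤ zᵀM^k z ≤ γ₂‖z‖² for all z ∈ ℝ^n (for fixed γ₁, γ₂ > 0), and μ_j^k ∈ Λ_{m_j} (j = 1,…,q), such that for every k: ∇f(x^k) + M^k d^k − Σ_{j=1}^q Dg_j(x^k)ᵀ μ_j^k = 0, ⟨μ_j^k, g_j(x^k) + Dg_j(x^k) d^k⟩ = 0 for all j, and g_j(x^k) + Dg_j(x^k) d^k ∈ Λ_{m_j} for all j. Then, setting Δ_j^k := Dg_j(x^k) d^k, one has Δ_j^k → 0, ∇f(x^k) − Σ_{j=1}^q Dg_j(x^k)ᵀ μ_j^k → 0, and for every k and j: g_j(x^k) + Δ_j^k ∈ Λ_{m_j} and ⟨g_j(x^k) + Δ_j^k, μ_j^k⟩ = 0 (i.e., the sequences {x^k}, {μ_j^k} satisfy the AKKT conditions). -/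
open Filter Topology

noncomputable section

lemma Mbound {n : ℕ} (γ₁ γ₂ : ℝ) (hγ₁ : 0 < γ₁) (hγ₂ : 0 < γ₂)
    (M : Evec n →ₗ[ℝ] Evec n)
    (hsym : ∀ u v : Evec n, (inner ℝ (M u) v : ℝ) = (inner ℝ u (M v) : ℝ))
    (hbd : ∀ z : Evec n,
      γ₁ * ‖z‖ ^ 2 ≤ (inner ℝ z (M z) : ℝ) ∧ (inner ℝ z (M z) : ℝ) ≤ γ₂ * ‖z‖ ^ 2) :
    ∀ u : Evec n, ‖M u‖ ≤ 2 * γ₂ * ‖u‖ := by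
  intro u
  by_cases hMu : M u = 0
  · simp [hMu]; positivity
  have hu : u ≠ 0 := by rintro rfl; simp at hMu
  have hupos : (0:ℝ) < ‖u‖ := norm_pos_iff.mpr hu
  have hMupos : (0:ℝ) < ‖M u‖ := norm_pos_iff.mpr hMu
  set v : Evec n := (‖u‖ / ‖M u‖) • M u with hv
  have hvn : ‖v‖ = ‖u‖ := by
    rw [hv, norm_smul, Real.norm_eq_abs, abs_of_nonneg (by positivity)]
    field_simp
  have h1 : (inner ℝ v (M u) : ℝ) = ‖u‖ * ‖M u‖ := by
    rw [hv, real_inner_smul_left, real_inner_self_eq_norm_sq]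
    field_simp
  have h2 : (inner ℝ u (M v) : ℝ) = ‖u‖ * ‖M u‖ := by
    rw [← hsym, real_inner_comm]; exact h1
  have hexp : (inner ℝ (u + v) (M (u + v)) : ℝ)
      = (inner ℝ u (M u) : ℝ) + (inner ℝ u (M v) : ℝ)
        + (inner ℝ v (M u) : ℝ) + (inner ℝ v (M v) : ℝ) := by
    rw [map_add]
    simp [inner_add_left, inner_add_right]; ring
  have hdu : (0:ℝ) ≤ (inner ℝ u (M u) : ℝ) :=
    le_trans (by positivity) (hbd u).1
  have hdv : (0:ℝ) ≤ (inner ℝ v (M v) : ℝ) :=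
    le_trans (by positivity) (hbd v).1
  have htotal := (hbd (u + v)).2
  have hn : ‖u + v‖ ≤ 2 * ‖u‖ := by
    calc ‖u + v‖ ≤ ‖u‖ + ‖v‖ := norm_add_le _ _
    _ = 2 * ‖u‖ := by rw [hvn]; ring
  have hn2 : ‖u + v‖ ^ 2 ≤ (2 * ‖u‖) ^ 2 := by
    have := norm_nonneg (u + v); nlinarith
  nlinarith [hexp, h1, h2, htotal, hn2]

/-- The SQP method of Kato and Fukushima generates AKKT sequences:
if `x k` is bounded, `d k → 0`, `M k` are symmetric with `γ₁‖z‖² ≤ ⟨z, M k z⟩ ≤ γ₂‖z‖²`,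
and `(d k, μ k)` solves the KKT system of the quadratic subproblem at `x k`, then with
`Δ k j := Dg_j(x k) (d k)` one has `Δ k j → 0`,
`∇f(x k) - Σ_j Dg_j(x k)ᵀ μ k j → 0`, and for every `k, j`:
`g_j(x k) + Δ k j ∈ Λ_{m_j}` and `⟨g_j(x k) + Δ k j, μ k j⟩ = 0`. -/
theorem stmt17 {n q : ℕ} (m : Fin q → ℕ) (hm : ∀ j, 1 ≤ m j)
    (f : Evec n → ℝ) (hf : ContDiff ℝ 1 f)
    (g0 : Fin q → Evec n → ℝ) (gh : (j : Fin q) → Evec n → Evec (m j))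
    (hg : ∀ j, ContDiff ℝ 1 fun x => (g0 j x, gh j x))
    (x : ℕ → Evec n) (hbd : ∃ R : ℝ, ∀ k, ‖x k‖ ≤ R)
    (d : ℕ → Evec n) (hd : Tendsto d atTop (𝓝 0))
    (γ₁ γ₂ : ℝ) (hγ₁ : 0 < γ₁) (hγ₂ : 0 < γ₂)
    (M : ℕ → Evec n →ₗ[ℝ] Evec n)
    (hMsym : ∀ k (u v : Evec n), (inner ℝ (M k u) v : ℝ) = (inner ℝ u (M k v) : ℝ))
    (hMbd : ∀ k (z : Evec n),
      γ₁ * ‖z‖ ^ 2 ≤ (inner ℝ z (M k z) : ℝ) ∧ (inner ℝ z (M k z) : ℝ) ≤ γ₂ * ‖z‖ ^ 2)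
    (μ : ℕ → (j : Fin q) → ℝ × Evec (m j)) (hμ : ∀ k j, inSOC (μ k j))
    (hkkt1 : ∀ k, gradient f (x k) + M k (d k)
        - ∑ j, dgT (g0 j) (gh j) (x k) (μ k j) = 0)
    (hkkt2 : ∀ k j, pairInner (μ k j)
        ((g0 j (x k), gh j (x k)) + fderiv ℝ (fun y => (g0 j y, gh j y)) (x k) (d k)) = 0)
    (hkkt3 : ∀ k j, inSOC
        ((g0 j (x k), gh j (x k)) + fderiv ℝ (fun y => (g0 j y, gh j y)) (x k) (d k))) :
    (∀ j, Tendsto (fun k => fderiv ℝ (fun y => (g0 j y, gh j y)) (x k) (d k))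
        atTop (𝓝 0)) ∧
    Tendsto (fun k => gradient f (x k) - ∑ j, dgT (g0 j) (gh j) (x k) (μ k j))
        atTop (𝓝 0) ∧
    (∀ k j, inSOC
        ((g0 j (x k), gh j (x k)) + fderiv ℝ (fun y => (g0 j y, gh j y)) (x k) (d k))) ∧
    (∀ k j, pairInner
        ((g0 j (x k), gh j (x k)) + fderiv ℝ (fun y => (g0 j y, gh j y)) (x k) (d k))
        (μ k j) = 0) := by
  have hdnorm : Tendsto (fun k => ‖d k‖) atTop (𝓝 0) := by
    simpa using hd.norm
  obtain ⟨R, hR⟩ := hbd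
  refine ⟨?_, ?_, hkkt3, ?_⟩
  · intro j
    have hcont : Continuous (fun y : Evec n =>
        fderiv ℝ (fun z => (g0 j z, gh j z)) y) :=
      (hg j).continuous_fderiv one_ne_zero
    obtain ⟨C, hC⟩ := (isCompact_closedBall (0 : Evec n) R).exists_bound_of_continuousOn
      (hcont.continuousOn)
    have hCk : ∀ k, ‖fderiv ℝ (fun z => (g0 j z, gh j z)) (x k)‖ ≤ C := by
      intro k
      exact hC (x k) (by simpa [Metric.mem_closedBall, dist_eq_norm] using hR k)
    rw [tendsto_zero_iff_norm_tendsto_zero]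
    refine squeeze_zero (g := fun k => C * ‖d k‖) (fun k => norm_nonneg _) (fun k => ?_) ?_
    · exact le_trans ((fderiv ℝ (fun z => (g0 j z, gh j z)) (x k)).le_opNorm (d k))
        (mul_le_mul_of_nonneg_right (hCk k) (norm_nonneg _))
    · simpa using hdnorm.const_mul C
  · have heq : ∀ k, gradient f (x k) - ∑ j, dgT (g0 j) (gh j) (x k) (μ k j)
        = -(M k (d k)) := by
      intro k
      have := hkkt1 k
      have : gradient f (x k) + M k (d k) - ∑ j, dgT (g0 j) (gh j) (x k) (μ k j)
          = 0 := this
      linear_combination (norm := abel) this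
    rw [funext heq, tendsto_zero_iff_norm_tendsto_zero]
    refine squeeze_zero (g := fun k => 2 * γ₂ * ‖d k‖) (fun k => norm_nonneg _) (fun k => ?_) ?_
    · rw [norm_neg]
      exact Mbound γ₁ γ₂ hγ₁ hγ₂ (M k) (hMsym k) (hMbd k) (d k)
    · simpa using hdnorm.const_mul (2 * γ₂)
  · intro k j
    have := hkkt2 k j
    simpa [pairInner, real_inner_comm, mul_comm] using this
end
end

section
/- Let n = 2, q = 1, m₁ = 3, and g : ℝ² → ℝ³ given by g(x₁, x₂) = (x₁, x₂, x₂), and let x̄ = (0, 0), so that g(x̄) = 0 and x̄ is feasible for the constraint g(x) ∈ Λ₃. Then weak-nondegeneracy holds at x̄, but nondegeneracy fails at x̄. -/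
open Filter Topology

noncomputable section

/-! ### Auxiliary lemmas -/

theorem grad_coord {k : ℕ} (i : Fin k) (x : Evec k) :
    gradient (fun y : Evec k => y i) x = EuclideanSpace.single i 1 := by
  apply HasGradientAt.gradient
  rw [hasGradientAt_iff_hasFDerivAt]
  have h : (InnerProductSpace.toDual ℝ (Evec k)) (EuclideanSpace.single i 1)
      = (EuclideanSpace.proj i : Evec k →L[ℝ] ℝ) := by
    ext u
    simp [InnerProductSpace.toDual_apply_apply, EuclideanSpace.inner_single_left]
  rw [h]
  exact ((EuclideanSpace.proj i : Evec k →L[ℝ] ℝ)).hasFDerivAt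

def constv (t : ℝ) : Evec 2 := WithLp.toLp 2 (fun _ => t)

theorem norm_constv (t : ℝ) : ‖constv t‖ = Real.sqrt 2 * |t| := by
  rw [EuclideanSpace.norm_eq]
  simp only [Fin.sum_univ_two, Real.norm_eq_abs, constv, PiLp.toLp_apply]
  rw [show |t|^2 + |t|^2 = 2 * t^2 by rw [sq_abs]; ring,
    Real.sqrt_mul (by norm_num), Real.sqrt_sq_eq_abs]

def cvec : Evec 2 := constv (Real.sqrt 2)⁻¹

theorem norm_cvec : ‖cvec‖ = 1 := by
  have h2 : Real.sqrt 2 > 0 := Real.sqrt_pos.2 (by norm_num)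
  rw [cvec, norm_constv, abs_of_pos (by positivity)]
  field_simp

theorem unitv_constv (t : ℝ) (ht : t ≠ 0) :
    unitv (constv t) = if t < 0 then -cvec else cvec := by
  have h2 : Real.sqrt 2 > 0 := Real.sqrt_pos.2 (by norm_num)
  unfold unitv
  rw [norm_constv]
  ext i
  rcases lt_or_gt_of_ne ht with h | h
  · rw [if_pos h]
    show (Real.sqrt 2 * |t|)⁻¹ * t = -cvec i
    rw [abs_of_neg h]
    show _ = -(Real.sqrt 2)⁻¹
    field_simp
  · rw [if_neg (by linarith)]
    show (Real.sqrt 2 * |t|)⁻¹ * t = cvec i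
    rw [abs_of_pos h]
    show _ = (Real.sqrt 2)⁻¹
    field_simp

theorem constv_zero : constv 0 = (0 : Evec 2) := by ext i; simp [constv]

theorem unitv_zero : unitv (0 : Evec 2) = 0 := by simp [unitv]

theorem hdg (u : ℝ × Evec 2) :
    dgT (fun x : Evec 2 => x 0)
      (fun x : Evec 2 => (WithLp.toLp 2 (fun _ : Fin 2 => x 1) : Evec 2)) 0 u
      = u.1 • EuclideanSpace.single (0 : Fin 2) (1:ℝ)
        + (u.2 0 + u.2 1) • EuclideanSpace.single (1 : Fin 2) (1:ℝ) := by
  unfold dgT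
  rw [Fin.sum_univ_two]
  simp only [PiLp.toLp_apply, grad_coord, add_smul]

theorem famIndep_core (v : Evec 2) (h01 : v 0 = v 1) (h1 : v 1 ≠ 0) :
    famLinIndep (m := fun _ : Fin 1 => 2)
      (fun _ (x : Evec 2) => x 0)
      (fun _ (x : Evec 2) => (WithLp.toLp 2 (fun _ : Fin 2 => x 1) : Evec 2))
      (0 : Evec 2) (fun _ => v) := by
  intro η a b hη _ hc j
  have hj : j = 0 := Subsingleton.elim j 0
  subst hj
  have hη0 : η 0 = 0 := by
    apply hη 0
    intro hIB
    exact hIB.1 ⟨rfl, by ext; simp⟩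
  unfold famComb at hc
  rw [Fin.sum_univ_one] at hc
  have hgh0 : (WithLp.toLp 2 (fun _ : Fin 2 => (0 : Evec 2) 1) : Evec 2) = constv 0 := rfl
  rw [hη0] at hc
  simp only [zero_smul, zero_add] at hc
  rw [hdg, hdg] at hc
  have h0 := congrArg (fun v : Evec 2 => v 0) hc
  have h1' := congrArg (fun v : Evec 2 => v 1) hc
  simp only [PiLp.add_apply, PiLp.smul_apply, PiLp.neg_apply,
    EuclideanSpace.single_apply, smul_eq_mul, PiLp.zero_apply] at h0 h1'
  norm_num at h0 h1'
  rw [h01] at h1'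
  have e : (b 0 - a 0) * (2 * v 1) = 0 := by linear_combination h1'
  rcases mul_eq_zero.mp e with h | h
  · exact ⟨hη0, by linarith, by linarith⟩
  · exact absurd (by linarith : v 1 = 0) h1

theorem cvec_comp (i : Fin 2) : cvec i = (Real.sqrt 2)⁻¹ := rfl

theorem famIndep_pos :
    famLinIndep (m := fun _ : Fin 1 => 2)
      (fun _ (x : Evec 2) => x 0)
      (fun _ (x : Evec 2) => (WithLp.toLp 2 (fun _ : Fin 2 => x 1) : Evec 2))
      (0 : Evec 2) (fun _ => cvec) :=
  famIndep_core cvec rfl (by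
    rw [cvec_comp]
    exact inv_ne_zero (Real.sqrt_ne_zero'.2 (by norm_num)))

theorem famIndep_neg :
    famLinIndep (m := fun _ : Fin 1 => 2)
      (fun _ (x : Evec 2) => x 0)
      (fun _ (x : Evec 2) => (WithLp.toLp 2 (fun _ : Fin 2 => x 1) : Evec 2))
      (0 : Evec 2) (fun _ => -cvec) :=
  famIndep_core (-cvec) rfl (by
    show -(cvec 1) ≠ 0
    rw [cvec_comp]
    simp [Real.sqrt_ne_zero'])

/-- For the single constraint `g(x₁,x₂) = (x₁, x₂, x₂) ∈ Λ₃` in `ℝ²` and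
the feasible point `x̄ = (0,0)` (where `g(x̄) = 0`), weak-nondegeneracy holds at `x̄` while
nondegeneracy (surjectivity of `Dg(x̄)`) fails at `x̄`. -/
theorem stmt18 :
    weakNondeg (m := fun _ : Fin 1 => 2)
      (fun _ (x : Evec 2) => x 0)
      (fun _ (x : Evec 2) => (WithLp.toLp 2 (fun _ : Fin 2 => x 1) : Evec 2))
      (0 : Evec 2) ∧
    ¬ Function.Surjective
        ⇑(fderiv ℝ
          (fun x : Evec 2 => ((x 0 : ℝ), (WithLp.toLp 2 (fun _ : Fin 2 => x 1) : Evec 2)))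
          (0 : Evec 2)) := by
  constructor
  · -- weak-nondegeneracy
    intro x hx
    set S : Set ℕ := {k | x k 1 < 0} with hSdef
    have key : ∀ (I : Set ℕ) (wb : Evec 2), I.Infinite →
        (∀ k ∈ I, (if x k 1 < 0 then -cvec else cvec) = wb) →
        ‖wb‖ = 1 →
        famLinIndep (m := fun _ : Fin 1 => 2)
          (fun _ (y : Evec 2) => y 0)
          (fun _ (y : Evec 2) => (WithLp.toLp 2 (fun _ : Fin 2 => y 1) : Evec 2))
          (0 : Evec 2) (fun _ => wb) →
        ∃ (I' : Set ℕ) (w : ℕ → (j : Fin 1) → Evec 2) (wb' : Fin 1 → Evec 2),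
          I'.Infinite ∧
          eigParams (m := fun _ : Fin 1 => 2)
            (fun _ (y : Evec 2) => y 0)
            (fun _ (y : Evec 2) => (WithLp.toLp 2 (fun _ : Fin 2 => y 1) : Evec 2))
            (0 : Evec 2) x (fun _ _ => 0) I' w wb' ∧
          famLinIndep (m := fun _ : Fin 1 => 2)
            (fun _ (y : Evec 2) => y 0)
            (fun _ (y : Evec 2) => (WithLp.toLp 2 (fun _ : Fin 2 => y 1) : Evec 2))
            (0 : Evec 2) wb' := by
      intro I wb hI hwI hnorm hfam
      refine ⟨I, fun k _ => if x k 1 < 0 then -cvec else cvec, fun _ => wb, hI, ⟨?_, ?_⟩, ?_⟩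
      · intro k _ j _
        constructor
        · show ‖if x k 1 < 0 then -cvec else cvec‖ = 1
          by_cases h : x k 1 < 0
          · rw [if_pos h, norm_neg, norm_cvec]
          · rw [if_neg h, norm_cvec]

        · intro hne
          show (if x k 1 < 0 then -cvec else cvec) = unitv (constv (x k 1) + 0)
          rw [add_zero]
          have ht : x k 1 ≠ 0 := by
            intro h0
            apply hne
            show constv (x k 1) + 0 = 0
            rw [h0, constv_zero, add_zero]
          rw [unitv_constv _ ht]
      · intro j _
        refine ⟨hnorm, ?_⟩
        apply Tendsto.congr' _ (tendsto_const_nhds (x := wb))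
        rw [Filter.EventuallyEq, Filter.eventually_inf_principal]
        filter_upwards with k hk
        exact (hwI k hk).symm
      · exact hfam
    by_cases hS : S.Infinite
    · exact key S (-cvec) hS (fun k hk => if_pos hk) (by rw [norm_neg, norm_cvec])
        famIndep_neg
    · have hSc : Sᶜ.Infinite := by
        rw [Set.not_infinite] at hS
        exact Set.Finite.infinite_compl hS
      exact key Sᶜ cvec hSc (fun k hk => if_neg hk) norm_cvec famIndep_pos
  · -- nondegeneracy fails
    intro hs
    set D := fderiv ℝ
      (fun x : Evec 2 => ((x 0 : ℝ), (WithLp.toLp 2 (fun _ : Fin 2 => x 1) : Evec 2)))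
      (0 : Evec 2) with hD
    have hrange : LinearMap.range D.toLinearMap = ⊤ :=
      LinearMap.range_eq_top.2 hs
    have hle := LinearMap.finrank_range_le D.toLinearMap
    rw [hrange, finrank_top] at hle
    simp only [Module.finrank_prod, Module.finrank_self, Module.finrank_fin_fun,
      finrank_euclideanSpace_fin] at hle
    omega
end
end

section
/- Let n = 1, q = 1, m₁ = 2, and g : ℝ → ℝ² given by g(x) = (−x, x), and let x̄ = 0 (the unique point with g(x̄) ∈ Λ₂; note g(x̄) = 0). Then seq-CRCQ and seq-CPLD both hold at x̄, while nondegeneracy and Robinson's CQ both fail at x̄. -/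
open Filter Topology

noncomputable section

/-! ### Auxiliary lemmas for Statement 19 -/

def E0 : Evec 1 := EuclideanSpace.single 0 1

lemma grad_neg' (x : Evec 1) :
    gradient (fun y : Evec 1 => -(y 0)) x = EuclideanSpace.single 0 (-1) := by
  apply HasGradientAt.gradient
  rw [hasGradientAt_iff_hasFDerivAt]
  have h : HasFDerivAt (fun y : Evec 1 => -(y 0)) (-(EuclideanSpace.proj (𝕜 := ℝ) (0 : Fin 1)) : Evec 1 →L[ℝ] ℝ) x := (-(EuclideanSpace.proj (𝕜 := ℝ) (0 : Fin 1))).hasFDerivAt (x := x)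
  refine h.congr_fderiv ?_
  ext v
  symm
  simp [EuclideanSpace.inner_single_left]

lemma grad_id' (x : Evec 1) (i : Fin 1) : gradient (fun y : Evec 1 => y i) x = E0 := by
  obtain rfl : i = 0 := Subsingleton.elim i 0
  apply HasGradientAt.gradient
  rw [hasGradientAt_iff_hasFDerivAt]
  have h : HasFDerivAt (fun y : Evec 1 => y 0) (EuclideanSpace.proj (𝕜 := ℝ) (0 : Fin 1) : Evec 1 →L[ℝ] ℝ) x := (EuclideanSpace.proj (𝕜 := ℝ) (0 : Fin 1)).hasFDerivAt (x := x)
  refine h.congr_fderiv ?_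
  ext v
  symm
  simp [E0, EuclideanSpace.inner_single_left]

lemma dgT_eq' (x : Evec 1) (u : ℝ × Evec 1) :
    dgT (fun y : Evec 1 => -(y 0)) (fun y : Evec 1 => y) x u = (u.2 0 - u.1) • E0 := by
  unfold dgT
  rw [Fin.sum_univ_one, grad_id']
  ext i
  fin_cases i
  simp [grad_neg', E0, EuclideanSpace.single_apply]
  ring

lemma vec_eq' (v : Evec 1) : v = v 0 • E0 := by
  ext i
  fin_cases i
  simp [E0, EuclideanSpace.single_apply]

lemma norm_E0 : ‖E0‖ = 1 := by simp [E0]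

lemma unitv_pos' {s : ℝ} (hs : 0 < s) : unitv (s • E0) = E0 := by
  unfold unitv
  rw [norm_smul, norm_E0, smul_smul]
  simp [abs_of_pos hs]
  rw [inv_mul_cancel₀ hs.ne']
  simp

lemma unitv_neg' {s : ℝ} (hs : s < 0) : unitv (s • E0) = -E0 := by
  unfold unitv
  rw [norm_smul, norm_E0, smul_smul]
  simp [abs_of_neg hs]
  have : (-s)⁻¹ * s = -1 := by rw [inv_neg, neg_mul, inv_mul_cancel₀ hs.ne]
  rw [inv_mul_cancel₀ hs.ne, one_smul]

lemma memIB_false' (j : Fin 1) :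
    ¬ memIB (m := fun _ : Fin 1 => 1)
      (fun _ (x : Evec 1) => -(x 0)) (fun _ (x : Evec 1) => x) (0 : Evec 1) j := by
  intro h
  exact h.1 ⟨by simp, rfl⟩

lemma famComb_transfer' (x x' : Evec 1) (w : Fin 1 → Evec 1) (η a b : Fin 1 → ℝ)
    (hη : η 0 = 0) :
    famComb (m := fun _ : Fin 1 => 1)
      (fun _ (y : Evec 1) => -(y 0)) (fun _ (y : Evec 1) => y) x w η a b
    = famComb (m := fun _ : Fin 1 => 1)
      (fun _ (y : Evec 1) => -(y 0)) (fun _ (y : Evec 1) => y) x' w η a b := by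
  simp [famComb, Fin.sum_univ_one, hη, dgT_eq']

/-- choice of an infinite index set and limiting unit vector -/
lemma choose_Ic (x : ℕ → Evec 1) (Δ : ℕ → (j : Fin 1) → ℝ × Evec 1) :
    ∃ (I : Set ℕ) (c : Evec 1), I.Infinite ∧ ‖c‖ = 1 ∧
      (∀ k ∈ I, x k + (Δ k 0).2 ≠ 0 → unitv (x k + (Δ k 0).2) = c) := by
  by_cases h : {k | 0 ≤ (x k + (Δ k 0).2) 0}.Infinite
  · refine ⟨_, E0, h, norm_E0, ?_⟩
    intro k hk hne
    have hv := vec_eq' (x k + (Δ k 0).2)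
    have hsk : (x k + (Δ k 0).2) 0 ≠ 0 := by
      intro h0
      rw [h0, zero_smul] at hv
      exact hne hv
    have hpos : 0 < (x k + (Δ k 0).2) 0 := lt_of_le_of_ne hk (Ne.symm hsk)
    rw [hv, unitv_pos' hpos]
  · rw [Set.not_infinite] at h
    have h2 : {k | (x k + (Δ k 0).2) 0 < 0}.Infinite := by
      have he : {k | 0 ≤ (x k + (Δ k 0).2) 0}ᶜ = {k | (x k + (Δ k 0).2) 0 < 0} := by
        ext k; simp [not_le]
      rw [← he]
      exact h.infinite_compl
    refine ⟨_, -E0, h2, by simpa using norm_E0, ?_⟩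
    intro k hk hne
    have hv := vec_eq' (x k + (Δ k 0).2)
    rw [hv, unitv_neg' hk]

lemma eig_of' (x : ℕ → Evec 1) (Δ : ℕ → (j : Fin 1) → ℝ × Evec 1) (I : Set ℕ)
    (c : Evec 1) (hc : ‖c‖ = 1)
    (hu : ∀ k ∈ I, x k + (Δ k 0).2 ≠ 0 → unitv (x k + (Δ k 0).2) = c) :
    eigParams (m := fun _ : Fin 1 => 1)
      (fun _ (y : Evec 1) => -(y 0)) (fun _ (y : Evec 1) => y) (0 : Evec 1) x Δ I
      (fun _ _ => c) (fun _ => c) := by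
  constructor
  · intro k hk j _
    obtain rfl : j = 0 := Subsingleton.elim j 0
    exact ⟨hc, fun hne => (hu k hk hne).symm⟩
  · intro j _
    exact ⟨hc, tendsto_const_nhds⟩

/-- For the single constraint `g(x) = (-x, x) ∈ Λ₂` in `ℝ` and its unique
feasible point `x̄ = 0` (where `g(x̄) = 0`), seq-CRCQ and seq-CPLD both hold at `x̄`, while
nondegeneracy (surjectivity of `Dg(x̄)`) and Robinson's CQ (no nonzero `y ∈ Λ₂` with
`Dg(x̄)ᵀ y = 0`) both fail at `x̄`. -/


theorem stmt19 :
    seqCRCQ (m := fun _ : Fin 1 => 1)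
      (fun _ (x : Evec 1) => -(x 0)) (fun _ (x : Evec 1) => x) (0 : Evec 1) ∧
    seqCPLD (m := fun _ : Fin 1 => 1)
      (fun _ (x : Evec 1) => -(x 0)) (fun _ (x : Evec 1) => x) (0 : Evec 1) ∧
    ¬ Function.Surjective
        ⇑(fderiv ℝ (fun x : Evec 1 => ((-(x 0) : ℝ), x)) (0 : Evec 1)) ∧
    ∃ y : ℝ × Evec 1, inSOC y ∧ y ≠ 0 ∧
      dgT (fun x : Evec 1 => -(x 0)) (fun x : Evec 1 => x) (0 : Evec 1) y = 0 := by
  classical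
  have hG0 : ∀ (j : Fin 1) (y : Evec 1),
      (fun _ (x : Evec 1) => -(x 0)) j y = -(y 0) := fun _ _ => rfl
  refine ⟨?_, ?_, ?_, ?_⟩
  · -- seq-CRCQ
    intro x Δ _ _
    obtain ⟨I, c, hI, hc, hu⟩ := choose_Ic x Δ
    refine ⟨I, fun _ _ => c, fun _ => c, hI, eig_of' x Δ I c hc hu, ?_⟩
    intro JB Jm Jp hJB _ _ hdep
    obtain ⟨η, a, b, hη, ha, hb, hnz, hcomb⟩ := hdep
    apply Filter.Eventually.of_forall
    intro k
    refine ⟨η, a, b, hη, ha, hb, hnz, ?_⟩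
    have hη0 : η 0 = 0 := hη 0 (fun h => memIB_false' 0 (hJB 0 h))
    rw [famComb_transfer' (x k) 0 _ _ _ _ hη0]
    exact hcomb
  · -- seq-CPLD
    intro x Δ _ _
    obtain ⟨I, c, hI, hc, hu⟩ := choose_Ic x Δ
    refine ⟨I, fun _ _ => c, fun _ => c, hI, eig_of' x Δ I c hc hu, ?_⟩
    intro JB Jm Jp hJB _ _ hdep
    obtain ⟨η, a, b, _, _, _, hη, ha, hb, hnz, hcomb⟩ := hdep
    apply Filter.Eventually.of_forall
    intro k
    refine ⟨η, a, b, hη, ha, hb, hnz, ?_⟩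
    have hη0 : η 0 = 0 := hη 0 (fun h => memIB_false' 0 (hJB 0 h))
    rw [famComb_transfer' (x k) 0 _ _ _ _ hη0]
    exact hcomb
  · -- nondegeneracy fails
    intro hsurj
    set K : Evec 1 →L[ℝ] ℝ × Evec 1 :=
      (-(EuclideanSpace.proj (𝕜 := ℝ) (0 : Fin 1))).prod (ContinuousLinearMap.id ℝ (Evec 1))
      with hK
    have hf : HasFDerivAt (fun x : Evec 1 => ((-(x 0) : ℝ), x)) K (0 : Evec 1) := by
      have h1 := (-(EuclideanSpace.proj (𝕜 := ℝ) (0 : Fin 1))).hasFDerivAt (x := (0 : Evec 1))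
      have h2 := (ContinuousLinearMap.id ℝ (Evec 1)).hasFDerivAt (x := (0 : Evec 1))
      exact h1.prodMk h2
    rw [hf.fderiv] at hsurj
    obtain ⟨v, hv⟩ := hsurj ((1 : ℝ), (0 : Evec 1))
    have hv1 : -(v 0) = 1 ∧ v = 0 := by
      have := hv
      simp [hK, ContinuousLinearMap.prod_apply, Prod.ext_iff] at this
      exact this
    have := hv1.1
    rw [hv1.2] at this
    simp at this
  · -- Robinson's CQ fails
    refine ⟨((1 : ℝ), E0), ?_, ?_, ?_⟩
    · show ‖E0‖ ≤ 1
      rw [norm_E0]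
    · intro h
      have h2 : E0 = 0 := congrArg Prod.snd h
      have := congrArg (fun v : Evec 1 => v 0) h2
      simp [E0, EuclideanSpace.single_apply] at this
    · rw [dgT_eq']
      simp [E0]
end
end
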